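/- arXiv:2511.03814 — 8 statements merged into one kernel-verified Lean document; each statement's English description precedes it below -/
import Mathlib

section
/- Let N be a nondeterministic finite automaton over an alphabet Σ with finite state set Q and accepting set F. If for every state q ∈ Q the singleton {q} is co-reachable in N, then all states of the subset automaton of N are pairwise distinguishable: for any two subsets S ≠ T of Q there exists a word v such that exactly one of the sets N.evalFrom S v and N.evalFrom T v meets F. -/
lemma evalFrom_biUnion {σ Q : Type} (N : NFA σ Q) (u : List σ) :
    ∀ S : Set Q, N.evalFrom S u = ⋃ p ∈ S, N.evalFrom {p} u := by
  induction u with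
  | nil => intro S; simp [NFA.evalFrom]
  | cons a u ih =>
    intro S
    have h1 : N.evalFrom S (a :: u) = N.evalFrom (N.stepSet S a) u := rfl
    rw [h1, ih]
    ext x
    simp only [Set.mem_iUnion, NFA.stepSet, Set.mem_iUnion]
    constructor
    · rintro ⟨s, ⟨p, hp, hs⟩, hx⟩
      refine ⟨p, hp, ?_⟩
      have : N.evalFrom {p} (a :: u) = N.evalFrom (N.stepSet {p} a) u := rfl
      rw [this, ih]
      exact Set.mem_iUnion₂.2 ⟨s, by simpa [NFA.stepSet] using hs, hx⟩
    · rintro ⟨p, hp, hx⟩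
      have : N.evalFrom {p} (a :: u) = N.evalFrom (N.stepSet {p} a) u := rfl
      rw [this, ih] at hx
      obtain ⟨s, hs, hx⟩ := Set.mem_iUnion₂.1 hx
      exact ⟨s, ⟨p, hp, by simpa [NFA.stepSet] using hs⟩, hx⟩

lemma key {σ Q : Type} (N : NFA σ Q) (u : List σ) (S : Set Q) :
    (N.evalFrom S u ∩ N.accept).Nonempty ↔
      ∃ p ∈ S, (N.evalFrom {p} u ∩ N.accept).Nonempty := by
  rw [evalFrom_biUnion N u S]
  constructor
  · rintro ⟨x, hx, hacc⟩
    obtain ⟨p, hp, hx⟩ := Set.mem_iUnion₂.1 hx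
    exact ⟨p, hp, x, hx, hacc⟩
  · rintro ⟨p, hp, x, hx, hacc⟩
    exact ⟨x, Set.mem_iUnion₂.2 ⟨p, hp, hx⟩, hacc⟩

/-- If every singleton `{q}` is co-reachable in the NFA `N`, then all states of the subset automaton
of `N` are pairwise distinguishable. -/
theorem stmt1 {σ Q : Type} [Fintype Q] (N : NFA σ Q)
    (hco : ∀ q : Q, ∃ u : List σ, {p : Q | (N.evalFrom {p} u ∩ N.accept).Nonempty} = {q}) :
    ∀ S T : Set Q, S ≠ T →
      ∃ v : List σ,
        Xor' (N.evalFrom S v ∩ N.accept).Nonempty (N.evalFrom T v ∩ N.accept).Nonempty := by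
  have main : ∀ S T : Set Q, ∀ q, q ∈ S → q ∉ T →
      ∃ v : List σ,
        Xor' (N.evalFrom S v ∩ N.accept).Nonempty (N.evalFrom T v ∩ N.accept).Nonempty := by
    intro S T q hqS hqT
    obtain ⟨u, hu⟩ := hco q
    refine ⟨u, Or.inl ⟨?_, ?_⟩⟩
    · exact (key N u S).2 ⟨q, hqS, by have := Set.ext_iff.1 hu q; simp at this; exact this⟩
    · rintro hT
      obtain ⟨p, hpT, hp⟩ := (key N u T).1 hT
      have : p ∈ ({q} : Set Q) := hu ▸ hp
      exact hqT (this ▸ hpT)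
  intro S T hST
  by_cases h : S ⊆ T
  · obtain ⟨q, hqT, hqS⟩ := Set.not_subset.1 (fun h2 => hST (h.antisymm h2))
    obtain ⟨v, hv⟩ := main T S q hqT hqS
    exact ⟨v, hv.symm⟩
  · obtain ⟨q, hqS, hqT⟩ := Set.not_subset.1 h
    exact main S T q hqS hqT
end

section
/- Let k ≥ 2 and let A₁,…,A_k be DFAs over a common alphabet Σ with finite state sets Q₁,…,Q_k, start states s₁,…,s_k and accepting sets F₁,…,F_k. Then the concatenation L(A₁)L(A₂)⋯L(A_k) is accepted by some DFA whose number of states is at most the number of tuples (S₁,S₂,…,S_k) with S_i ⊆ Q_i for each i such that S₁ is a singleton and, for every 1 ≤ i ≤ k−1: S_i = ∅ implies S_{i+1} = ∅, and S_i ∩ F_i ≠ ∅ implies s_{i+1} ∈ S_{i+1}. -/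
namespace Stmt2Aux

variable {σ : Type} {k : ℕ} {Q : Fin k → Type}

/-- Product of the first `n` languages. -/
def P (A : ∀ i, DFA σ (Q i)) : ℕ → Language σ
  | 0 => 1
  | n+1 => P A n * (if h : n < k then (A ⟨n, h⟩).accepts else 1)

/-- The cascading start state of the concatenation DFA. -/
def startAux (A : ∀ i, DFA σ (Q i)) : (n : ℕ) → (h : n < k) → Set (Q ⟨n, h⟩)
  | 0, h => {(A ⟨0, h⟩).start}
  | n+1, h => {q | q = (A ⟨n+1, h⟩).start ∧
      (startAux A n (Nat.lt_of_succ_lt h) ∩ (A ⟨n, Nat.lt_of_succ_lt h⟩).accept).Nonempty}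

/-- The cascading transition of the concatenation DFA. -/
def nextAux (A : ∀ i, DFA σ (Q i)) (S : ∀ i, Set (Q i)) (a : σ) :
    (n : ℕ) → (h : n < k) → Set (Q ⟨n, h⟩)
  | 0, h => (fun q => (A ⟨0, h⟩).step q a) '' S ⟨0, h⟩
  | n+1, h => (fun q => (A ⟨n+1, h⟩).step q a) '' S ⟨n+1, h⟩ ∪
      {q | q = (A ⟨n+1, h⟩).start ∧
        (nextAux A S a n (Nat.lt_of_succ_lt h) ∩
          (A ⟨n, Nat.lt_of_succ_lt h⟩).accept).Nonempty}

/-- Validity of a tuple of sets, matching the statement. -/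
def Valid (A : ∀ i, DFA σ (Q i)) (h0 : 0 < k) (S : ∀ i : Fin k, Set (Q i)) : Prop :=
  (∃ q, S ⟨0, h0⟩ = {q}) ∧
  ∀ i : Fin k, ∀ h : i.val + 1 < k,
    (S i = ∅ → S ⟨i.val + 1, h⟩ = ∅) ∧
    ((S i ∩ (A i).accept).Nonempty → (A ⟨i.val + 1, h⟩).start ∈ S ⟨i.val + 1, h⟩)

theorem nextAux_empty (A : ∀ i, DFA σ (Q i)) (S : ∀ i, Set (Q i)) (a : σ) :
    (n : ℕ) → (h : n < k) → nextAux A S a n h = ∅ → S ⟨n, h⟩ = ∅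
  | 0, _, he => Set.image_eq_empty.1 he
  | n+1, _, he => Set.image_eq_empty.1 (Set.union_empty_iff.1 he).1

theorem start_valid (A : ∀ i, DFA σ (Q i)) (h0 : 0 < k) :
    Valid A h0 (fun i => startAux A i.val i.isLt) := by
  constructor
  · exact ⟨(A ⟨0, h0⟩).start, rfl⟩
  · intro i h
    constructor
    · intro hemp
      ext q
      simp only [startAux, Set.mem_setOf_eq, Set.mem_empty_iff_false, iff_false, not_and]
      rintro rfl ⟨p, hp, -⟩
      rw [Set.eq_empty_iff_forall_notMem] at hemp
      exact hemp p hp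
    · rintro ⟨p, hp, hpF⟩
      exact ⟨rfl, p, hp, hpF⟩

theorem step_valid (A : ∀ i, DFA σ (Q i)) (h0 : 0 < k) (S : ∀ i, Set (Q i))
    (hS : Valid A h0 S) (a : σ) :
    Valid A h0 (fun i => nextAux A S a i.val i.isLt) := by
  constructor
  · obtain ⟨q0, hq0⟩ := hS.1
    refine ⟨(A ⟨0, h0⟩).step q0 a, ?_⟩
    show (fun q => (A ⟨0, h0⟩).step q a) '' S ⟨0, h0⟩ = _
    rw [hq0, Set.image_singleton]
  · intro i h
    constructor
    · intro hemp
      have h1 : S i = ∅ := nextAux_empty A S a i.val i.isLt hemp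
      have h2 : S ⟨i.val + 1, h⟩ = ∅ := (hS.2 i h).1 h1
      ext q
      simp only [nextAux, Set.mem_union, Set.mem_image, Set.mem_setOf_eq,
        Set.mem_empty_iff_false, iff_false]
      rintro (⟨p, hp, -⟩ | ⟨rfl, p, hp, -⟩)
      · rw [h2] at hp; exact hp
      · rw [show nextAux A S a i.val (Nat.lt_of_succ_lt h) = ∅ from hemp] at hp
        exact hp
    · rintro ⟨p, hp, hpF⟩
      exact Set.mem_union_right _ ⟨rfl, p, hp, hpF⟩

/-- The concatenation DFA on valid tuples. -/
def D' (A : ∀ i, DFA σ (Q i)) (h0 : 0 < k) :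
    DFA σ {S : ∀ i : Fin k, Set (Q i) // Valid A h0 S} where
  step S a := ⟨fun i => nextAux A S.1 a i.val i.isLt, step_valid A h0 S.1 S.2 a⟩
  start := ⟨fun i => startAux A i.val i.isLt, start_valid A h0⟩
  accept := {S | (S.1 ⟨k - 1, Nat.sub_lt h0 one_pos⟩ ∩
      (A ⟨k - 1, Nat.sub_lt h0 one_pos⟩).accept).Nonempty}

theorem startAux_char (A : ∀ i, DFA σ (Q i)) :
    (n : ℕ) → (h : n < k) → ∀ q : Q ⟨n, h⟩,
      (q ∈ startAux A n h ↔ [] ∈ P A n ∧ q = (A ⟨n, h⟩).start)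
  | 0, h, q => ⟨fun hq => ⟨Language.nil_mem_one, hq⟩, fun ⟨_, hq⟩ => hq⟩
  | n+1, h, q => by
    have hn := Nat.lt_of_succ_lt h
    have ih := startAux_char A n hn
    constructor
    · rintro ⟨rfl, p, hp, hpF⟩
      refine ⟨?_, rfl⟩
      obtain ⟨h1, rfl⟩ := (ih p).1 hp
      rw [P, dif_pos hn]
      exact Language.mem_mul.2 ⟨[], h1, [], (DFA.mem_accepts _).2 hpF, rfl⟩
    · rintro ⟨h1, rfl⟩
      rw [P, dif_pos hn] at h1
      obtain ⟨u, hu, v, hv, huv⟩ := Language.mem_mul.1 h1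
      obtain ⟨rfl, rfl⟩ := List.append_eq_nil_iff.1 huv
      exact ⟨rfl, (A ⟨n, hn⟩).start, (ih _).2 ⟨hu, rfl⟩, (DFA.mem_accepts _).1 hv⟩

theorem image_char (A : ∀ i, DFA σ (Q i)) (w : List σ) (a : σ) (S : ∀ i, Set (Q i))
    (n : ℕ) (h : n < k)
    (hS : ∀ q : Q ⟨n, h⟩, q ∈ S ⟨n, h⟩ ↔
      ∃ u v, u ++ v = w ∧ u ∈ P A n ∧ (A ⟨n, h⟩).eval v = q)
    (q : Q ⟨n, h⟩) :
    q ∈ (fun p => (A ⟨n, h⟩).step p a) '' S ⟨n, h⟩ ↔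
      ∃ u v, u ++ v = w ++ [a] ∧ v ≠ [] ∧ u ∈ P A n ∧ (A ⟨n, h⟩).eval v = q := by
  constructor
  · rintro ⟨p, hp, rfl⟩
    obtain ⟨u, v, huv, hu, hev⟩ := (hS p).1 hp
    refine ⟨u, v ++ [a], by rw [← List.append_assoc, huv], by simp, hu, ?_⟩
    rw [DFA.eval_append_singleton, hev]
  · rintro ⟨u, v, huv, hvne, hu, hev⟩
    rcases v.eq_nil_or_concat with rfl | ⟨v', b, rfl⟩
    · exact absurd rfl hvne
    · rw [List.concat_eq_append] at huv hev
      rw [← List.append_assoc] at huv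
      obtain ⟨huv', hb⟩ := List.append_inj' huv rfl
      obtain rfl : b = a := by simpa using hb
      rw [DFA.eval_append_singleton] at hev
      exact ⟨(A ⟨n, h⟩).eval v', (hS _).2 ⟨u, v', huv', hu, rfl⟩, hev⟩

theorem nextAux_char (A : ∀ i, DFA σ (Q i)) (w : List σ) (a : σ) (S : ∀ i, Set (Q i))
    (hS : ∀ (n : ℕ) (h : n < k) (q : Q ⟨n, h⟩), q ∈ S ⟨n, h⟩ ↔
      ∃ u v, u ++ v = w ∧ u ∈ P A n ∧ (A ⟨n, h⟩).eval v = q) :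
    (n : ℕ) → (h : n < k) → ∀ q : Q ⟨n, h⟩,
      (q ∈ nextAux A S a n h ↔
        ∃ u v, u ++ v = w ++ [a] ∧ u ∈ P A n ∧ (A ⟨n, h⟩).eval v = q)
  | 0, h, q => by
    rw [show nextAux A S a 0 h = (fun p => (A ⟨0, h⟩).step p a) '' S ⟨0, h⟩ from rfl,
      image_char A w a S 0 h (hS 0 h)]
    constructor
    · rintro ⟨u, v, huv, -, hu, hev⟩
      exact ⟨u, v, huv, hu, hev⟩
    · rintro ⟨u, v, huv, hu, hev⟩
      obtain rfl : u = [] := (Language.mem_one _).1 hu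
      obtain rfl : v = w ++ [a] := by simpa using huv
      exact ⟨[], w ++ [a], by simp, by simp, hu, hev⟩
  | n+1, h, q => by
    have hn := Nat.lt_of_succ_lt h
    have ih := nextAux_char A w a S hS n hn
    constructor
    · rintro (himg | ⟨rfl, p, hp, hpF⟩)
      · obtain ⟨u, v, huv, -, hu, hev⟩ :=
          (image_char A w a S (n+1) h (hS (n+1) h) q).1 himg
        exact ⟨u, v, huv, hu, hev⟩
      · obtain ⟨u, v, huv, hu, hev⟩ := (ih p).1 hp
        refine ⟨w ++ [a], [], by simp, ?_, rfl⟩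
        rw [P, dif_pos hn]
        exact Language.mem_mul.2 ⟨u, hu, v, (DFA.mem_accepts _).2 (hev ▸ hpF), huv⟩
    · rintro ⟨u, v, huv, hu, hev⟩
      rcases eq_or_ne v [] with rfl | hvne
      · right
        obtain rfl : u = w ++ [a] := by simpa using huv
        refine ⟨hev.symm, ?_⟩
        rw [P, dif_pos hn] at hu
        obtain ⟨u', hu', v', hv', huv'⟩ := Language.mem_mul.1 hu
        exact ⟨(A ⟨n, hn⟩).eval v', (ih _).2 ⟨u', v', huv', hu', rfl⟩,
          (DFA.mem_accepts _).1 hv'⟩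
      · left
        exact (image_char A w a S (n+1) h (hS (n+1) h) q).2 ⟨u, v, huv, hvne, hu, hev⟩

theorem eval_char (A : ∀ i, DFA σ (Q i)) (h0 : 0 < k) (w : List σ) :
    ∀ (n : ℕ) (h : n < k) (q : Q ⟨n, h⟩),
      q ∈ ((D' A h0).eval w).1 ⟨n, h⟩ ↔
        ∃ u v, u ++ v = w ∧ u ∈ P A n ∧ (A ⟨n, h⟩).eval v = q := by
  induction w using List.reverseRecOn with
  | nil =>
    intro n h q
    rw [DFA.eval_nil]
    have hc := startAux_char A n h q
    constructor
    · intro hq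
      obtain ⟨h1, h2⟩ := hc.1 hq
      exact ⟨[], [], rfl, h1, by rw [h2]; rfl⟩
    · rintro ⟨u, v, huv, hu, hev⟩
      obtain ⟨rfl, rfl⟩ := List.append_eq_nil_iff.1 huv
      exact hc.2 ⟨hu, hev.symm⟩
  | append_singleton w a ih =>
    intro n h q
    rw [DFA.eval_append_singleton]
    exact nextAux_char A w a ((D' A h0).eval w).1 ih n h q

theorem P_eq_last (A : ∀ i, DFA σ (Q i)) (m : ℕ) (hm : m + 1 = k) :
    P A k = P A m * (A ⟨m, hm ▸ Nat.lt_succ_self m⟩).accepts := by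
  subst hm
  rw [P, dif_pos (Nat.lt_succ_self m)]

theorem accepts_eq (A : ∀ i, DFA σ (Q i)) (h0 : 0 < k) :
    (D' A h0).accepts = P A k := by
  have hk1 : k - 1 < k := Nat.sub_lt h0 one_pos
  have hkk : k - 1 + 1 = k := Nat.succ_pred_eq_of_pos h0
  ext w
  rw [DFA.mem_accepts]
  constructor
  · rintro ⟨p, hp, hpF⟩
    obtain ⟨u, v, huv, hu, hev⟩ := (eval_char A h0 w (k-1) hk1 p).1 hp
    rw [P_eq_last A (k-1) hkk]
    exact Language.mem_mul.2 ⟨u, hu, v, (DFA.mem_accepts _).2 (hev ▸ hpF), huv⟩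
  · intro hw
    rw [P_eq_last A (k-1) hkk] at hw
    obtain ⟨u, hu, v, hv, huv⟩ := Language.mem_mul.1 hw
    exact ⟨(A ⟨k-1, hk1⟩).eval v, (eval_char A h0 w (k-1) hk1 _).2 ⟨u, v, huv, hu, rfl⟩,
      (DFA.mem_accepts _).1 hv⟩

theorem P_ofFn (A : ∀ i, DFA σ (Q i)) :
    (n : ℕ) → (h : n ≤ k) →
      P A n = (List.ofFn fun i : Fin n => (A (Fin.castLE h i)).accepts).prod
  | 0, _ => by simp [P]
  | n+1, h => by
    have hn : n < k := Nat.lt_of_succ_le h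
    rw [List.ofFn_succ', List.concat_eq_append, List.prod_append, List.prod_singleton,
      P, dif_pos hn, P_ofFn A n (Nat.le_of_succ_le h)]
    rfl

end Stmt2Aux

/-- The concatenation `L(A₁)L(A₂)⋯L(A_k)` of the languages of `k ≥ 2` DFAs is accepted by a DFA
whose number of states is at most the number of "valid" tuples `(S₁,…,S_k)`:
`S₁` a singleton, `Sᵢ = ∅ → Sᵢ₊₁ = ∅`, and `Sᵢ ∩ Fᵢ ≠ ∅ → sᵢ₊₁ ∈ Sᵢ₊₁`. -/
theorem stmt2 {σ : Type} (k : ℕ) (hk : 2 ≤ k)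
    (Q : Fin k → Type) [∀ i, Fintype (Q i)] (A : ∀ i, DFA σ (Q i)) :
    ∃ (Q' : Type) (_ : Fintype Q') (D : DFA σ Q'),
      D.accepts = (List.ofFn fun i => (A i).accepts).prod ∧
      Fintype.card Q' ≤
        Nat.card {S : ∀ i : Fin k, Set (Q i) //
          (∃ q, S ⟨0, Nat.lt_of_lt_of_le Nat.zero_lt_two hk⟩ = {q}) ∧
          ∀ i : Fin k, ∀ h : i.val + 1 < k,
            (S i = ∅ → S ⟨i.val + 1, h⟩ = ∅) ∧
            ((S i ∩ (A i).accept).Nonempty →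
              (A ⟨i.val + 1, h⟩).start ∈ S ⟨i.val + 1, h⟩)} := by
  have h0 : 0 < k := by omega
  haveI F : Fintype {S : ∀ i : Fin k, Set (Q i) // Stmt2Aux.Valid A h0 S} :=
    Fintype.ofFinite _
  refine ⟨{S : ∀ i : Fin k, Set (Q i) // Stmt2Aux.Valid A h0 S}, F,
    Stmt2Aux.D' A h0, ?_, ?_⟩
  · rw [Stmt2Aux.accepts_eq A h0, Stmt2Aux.P_ofFn A k le_rfl]
    rfl
  · rw [← Nat.card_eq_fintype_card]
    exact le_rfl
end

section
/- For every k ≥ 3 and all integers n₁,…,n_k ≥ 2, the number τ(n₁,…,n_k) of valid tuples satisfies n₁·2^{n₂+n₃+⋯+n_k} ≤ 2^{k−1}·τ(n₁,…,n_k) and 4·τ(n₁,…,n_k) ≤ 3·n₁·2^{n₂+n₃+⋯+n_k}. -/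
/-- A "valid" tuple `(S₁,…,S_k)` (with `S₁ = {q}` a singleton, so that it encodes the tuple
`(q, S₂,…,S_k)`): if `Sᵢ = ∅` then `Sᵢ₊₁ = ∅`, and if the last state `nᵢ−1` of `Fin (n i)`
belongs to `Sᵢ` then `0 ∈ Sᵢ₊₁`. -/
def ValidTuple {k : ℕ} (hk : 0 < k) (n : Fin k → ℕ)
    (S : ∀ i : Fin k, Set (Fin (n i))) : Prop :=
  (∃ q, S ⟨0, hk⟩ = {q}) ∧
  ∀ i : Fin k, ∀ h : i.val + 1 < k,
    (S i = ∅ → S ⟨i.val + 1, h⟩ = ∅) ∧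
    (∀ p : Fin (n i), p.val + 1 = n i → p ∈ S i →
      ∃ z : Fin (n ⟨i.val + 1, h⟩), z.val = 0 ∧ z ∈ S ⟨i.val + 1, h⟩)

lemma tau_lower {k : ℕ} (hk : 3 ≤ k) (n : Fin k → ℕ) (hn : ∀ i, 2 ≤ n i) (h0 : 0 < k) :
    n ⟨0, h0⟩ * 2 ^ (∑ i ∈ Finset.univ.erase (⟨0, h0⟩ : Fin k), n i)
      ≤ 2 ^ (k - 1) *
        Nat.card {S : ∀ i : Fin k, Set (Fin (n i)) // ValidTuple h0 n S} := by
  classical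
  set i0 : Fin k := ⟨0, h0⟩ with hi0
  set m : Fin k → ℕ := fun i => if i.val = 0 then 0 else n i - 1 with hm
  -- the injection
  have hval : ∀ (q : Fin (n i0)) (T : ∀ i, Set (Fin (m i))),
      ValidTuple h0 n (fun i => {p : Fin (n i) |
        if i.val = 0 then p.val = q.val
        else (p.val = 0 ∨ ∃ t ∈ T i, p.val = t.val + 1)}) := by
    intro q T
    have hne : ∀ i : Fin k, ∃ p : Fin (n i), p ∈ {p : Fin (n i) |
        if i.val = 0 then p.val = q.val
        else (p.val = 0 ∨ ∃ t ∈ T i, p.val = t.val + 1)} := by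
      intro i
      by_cases hi : i.val = 0
      · have hni : n i = n i0 := by
          have : i = i0 := Fin.ext (by simpa using hi)
          rw [this]
        exact ⟨⟨q.val, by rw [hni]; exact q.isLt⟩, by simp [hi]⟩
      · exact ⟨⟨0, by have := hn i; omega⟩, by simp [hi]⟩
    constructor
    · refine ⟨q, ?_⟩
      ext p
      simp [hi0]
      exact ⟨fun h => Fin.ext h, fun h => by rw [h]⟩
    · intro i h
      constructor
      · intro hemp
        obtain ⟨p, hp⟩ := hne i
        simp only [Set.eq_empty_iff_forall_notMem] at hemp
        exact absurd hp (hemp p)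
      · intro p hp hpS
        refine ⟨⟨0, by have := hn ⟨i.val + 1, h⟩; omega⟩, rfl, ?_⟩
        simp
  set F : (Fin (n i0) × ∀ i, Set (Fin (m i))) →
      {S : ∀ i : Fin k, Set (Fin (n i)) // ValidTuple h0 n S} :=
    fun qT => ⟨fun i => {p : Fin (n i) |
        if i.val = 0 then p.val = qT.1.val
        else (p.val = 0 ∨ ∃ t ∈ qT.2 i, p.val = t.val + 1)}, hval qT.1 qT.2⟩ with hF
  have hinj : Function.Injective F := by
    rintro ⟨q, T⟩ ⟨q', T'⟩ h
    have h' := congrArg Subtype.val h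
    simp only [hF] at h'
    have hq : q = q' := by
      have := congrFun h' i0
      have h2 : q ∈ {p : Fin (n i0) | if i0.val = 0 then p.val = q.val
          else (p.val = 0 ∨ ∃ t ∈ T i0, p.val = t.val + 1)} := by simp [hi0]
      rw [this] at h2
      simp [hi0] at h2
      exact Fin.ext h2
    have hT : T = T' := by
      funext i
      ext t
      have hmi : i.val ≠ 0 := by
        intro hc
        have := t.isLt
        simp [hm, hc] at this
      have hlt : t.val + 1 < n i := by
        have := t.isLt
        have h2 := hn i
        simp only [hm, if_neg hmi] at this
        omega
      have key : ∀ (T'' : ∀ i, Set (Fin (m i))), t ∈ T'' i ↔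
          (⟨t.val + 1, hlt⟩ : Fin (n i)) ∈ {p : Fin (n i) |
            if i.val = 0 then p.val = q'.val
            else (p.val = 0 ∨ ∃ t' ∈ T'' i, p.val = t'.val + 1)} := by
        intro T''
        simp only [Set.mem_setOf_eq, if_neg hmi]
        constructor
        · exact fun ht => Or.inr ⟨t, ht, rfl⟩
        · rintro (hz | ⟨t', ht', he⟩)
          · omega
          · have : t' = t := Fin.ext (by omega)
            rwa [this] at ht'
      rw [key T, key T']
      constructor
      · intro hmem
        have := congrFun h' i
        rw [← this]
        have hq' : q.val = q'.val := by rw [hq]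
        simp only [Set.mem_setOf_eq, if_neg hmi] at hmem ⊢
        exact hmem
      · intro hmem
        have := congrFun h' i
        rw [← this] at hmem
        simp only [Set.mem_setOf_eq, if_neg hmi] at hmem ⊢
        exact hmem
    rw [hq, hT]
  have hcard := Nat.card_le_card_of_injective F hinj
  have hD : Nat.card (Fin (n i0) × ∀ i, Set (Fin (m i)))
      = n i0 * 2 ^ (∑ i, m i) := by
    rw [Nat.card_prod, Nat.card_pi]
    congr 1
    · simp
    · rw [← Finset.prod_pow_eq_pow_sum]
      exact Finset.prod_congr rfl fun i _ => by simp [Nat.card_eq_fintype_card]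
  -- sums
  have hsum : (∑ i ∈ Finset.univ.erase i0, n i) = (∑ i, m i) + (k - 1) := by
    have h1 : (∑ i, m i) = ∑ i ∈ Finset.univ.erase i0, m i := by
      rw [← Finset.add_sum_erase Finset.univ m (Finset.mem_univ i0)]
      simp [hm, hi0]
    rw [h1]
    have h2 : (∑ i ∈ Finset.univ.erase i0, n i)
        = ∑ i ∈ Finset.univ.erase i0, ((n i - 1) + 1) := by
      refine Finset.sum_congr rfl fun i _ => ?_
      have := hn i; omega
    rw [h2, Finset.sum_add_distrib]
    congr 1
    · refine Finset.sum_congr rfl fun i hi => ?_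
      have hi' : i.val ≠ 0 := by
        intro hc
        exact (Finset.mem_erase.mp hi).1 (Fin.ext (by simpa using hc))
      simp [hm, hi']
    · simp [Finset.card_erase_of_mem]
  calc n i0 * 2 ^ (∑ i ∈ Finset.univ.erase i0, n i)
      = 2 ^ (k - 1) * (n i0 * 2 ^ (∑ i, m i)) := by
        rw [hsum, pow_add]; ring
    _ ≤ 2 ^ (k - 1) * Nat.card {S : ∀ i : Fin k, Set (Fin (n i)) // ValidTuple h0 n S} := by
        rw [← hD]
        exact Nat.mul_le_mul_left _ hcard

set_option maxHeartbeats 1000000 in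
lemma tau_upper {k : ℕ} (hk : 3 ≤ k) (n : Fin k → ℕ) (hn : ∀ i, 2 ≤ n i) (h0 : 0 < k) :
    4 * Nat.card {S : ∀ i : Fin k, Set (Fin (n i)) // ValidTuple h0 n S}
      ≤ 3 * (n ⟨0, h0⟩ *
        2 ^ (∑ i ∈ Finset.univ.erase (⟨0, h0⟩ : Fin k), n i)) := by
  classical
  set m : Fin k → ℕ := fun i =>
    if i.val = 0 then 0 else if i.val = 1 then n i - 1
    else if i.val = 2 then n i - 1 else n i with hm
  set i0 : Fin k := ⟨0, h0⟩ with hi0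
  set i1 : Fin k := ⟨1, by omega⟩ with hi1
  set i2 : Fin k := ⟨2, by omega⟩ with hi2
  set lastp : Fin (n i1) := ⟨n i1 - 1, by have := hn i1; omega⟩ with hlastp
  set zerop : Fin (n i2) := ⟨0, by have := hn i2; omega⟩ with hzerop
  let qf : {S : ∀ i : Fin k, Set (Fin (n i)) // ValidTuple h0 n S} → Fin (n i0) :=
    fun Sh => Sh.2.1.choose
  have hqf : qf = fun Sh => Sh.2.1.choose := rfl
  let cf : {S : ∀ i : Fin k, Set (Fin (n i)) // ValidTuple h0 n S} → Fin 3 :=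
    fun Sh => if lastp ∈ Sh.1 i1 then 2 else if zerop ∈ Sh.1 i2 then 1 else 0
  have hcf : cf = fun Sh => if lastp ∈ Sh.1 i1 then 2 else if zerop ∈ Sh.1 i2 then 1 else 0 := rfl
  let Tf : ∀ _ : {S : ∀ i : Fin k, Set (Fin (n i)) // ValidTuple h0 n S},
      ∀ i : Fin k, Set (Fin (m i)) :=
    fun Sh i => {t : Fin (m i) | ∃ p : Fin (n i), p ∈ Sh.1 i ∧
      p.val = if i.val = 2 then t.val + 1 else t.val}
  have hTf : Tf = fun Sh i => {t : Fin (m i) | ∃ p : Fin (n i), p ∈ Sh.1 i ∧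
      p.val = if i.val = 2 then t.val + 1 else t.val} := rfl
  have hlt12 : (i1 : Fin k).val + 1 < k := by simp [hi1]; omega
  have hidx : (⟨(i1 : Fin k).val + 1, hlt12⟩ : Fin k) = i2 := by
    apply Fin.ext; simp [hi1, hi2]
  have hmem : ∀ (Sh : {S : ∀ i : Fin k, Set (Fin (n i)) // ValidTuple h0 n S})
      (i : Fin k) (p : Fin (n i)), p ∈ Sh.1 i ↔
      (if i.val = 0 then p.val = (qf Sh).val
       else if i.val = 1 ∧ p.val + 1 = n i then cf Sh = 2
       else if i.val = 2 ∧ p.val = 0 then cf Sh ≠ 0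
       else ∃ t ∈ Tf Sh i, p.val = if i.val = 2 then t.val + 1 else t.val) := by
    rintro ⟨S, hS⟩ i p
    by_cases h0i : i.val = 0
    · rw [if_pos h0i]
      have : i = i0 := Fin.ext (by simpa using h0i)
      subst this
      have hspec := hS.1.choose_spec
      have h2 := Set.ext_iff.mp hspec p
      simp only [Set.mem_singleton_iff] at h2
      simp only [hqf]
      exact h2.trans Fin.ext_iff
    · rw [if_neg h0i]
      by_cases h1i : i.val = 1 ∧ p.val + 1 = n i
      · rw [if_pos h1i]
        have hii : i = i1 := Fin.ext (by simp [hi1, h1i.1])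
        subst hii
        have hp : p = lastp := Fin.ext (by simp [hlastp]; omega)
        subst hp
        simp only [hcf]
        constructor
        · intro h; rw [if_pos h]
        · intro hc
          by_contra h
          rw [if_neg h] at hc
          by_cases hz : zerop ∈ S i2
          · rw [if_pos hz] at hc; exact absurd hc (by decide)
          · rw [if_neg hz] at hc; exact absurd hc (by decide)
      · rw [if_neg h1i]
        by_cases h2i : i.val = 2 ∧ p.val = 0
        · rw [if_pos h2i]
          have hii : i = i2 := Fin.ext (by simp [hi2, h2i.1])
          subst hii
          have hp : p = zerop := Fin.ext (by simp [hzerop, h2i.2])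
          subst hp
          simp only [hcf]
          constructor
          · intro h
            by_cases hl : lastp ∈ S i1
            · rw [if_pos hl]; decide
            · rw [if_neg hl, if_pos h]; decide
          · intro hc
            by_cases hl : lastp ∈ S i1
            · have hv := (hS.2 i1 hlt12).2 lastp (by simp [hlastp]; have := hn i1; omega) hl
              rw [hidx] at hv
              obtain ⟨z, hz0, hzS⟩ := hv
              have : z = zerop := Fin.ext (by simp [hzerop, hz0])
              rwa [this] at hzS
            · by_contra hz
              rw [if_neg hl, if_neg hz] at hc
              exact hc rfl
        · rw [if_neg h2i]
          -- generic case
          have hmlt : ∀ pv : ℕ, pv < n i → (pv ≠ 0 ∨ i.val ≠ 2) →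
              (pv + 1 ≠ n i ∨ i.val ≠ 1) →
              (if i.val = 2 then pv - 1 else pv) < m i := by
            intro pv hpv hp2 hp1
            have hni := hn i
            by_cases e2 : i.val = 2
            · rw [if_pos e2]
              simp only [hm, if_neg h0i, if_neg (by omega : ¬ i.val = 1), if_pos e2]
              rcases hp2 with h | h
              · omega
              · exact absurd e2 h
            · rw [if_neg e2]
              by_cases e1 : i.val = 1
              · simp only [hm, if_neg h0i, if_pos e1]
                rcases hp1 with h | h
                · omega
                · exact absurd e1 h
              · simp only [hm, if_neg h0i, if_neg e1, if_neg e2]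
                omega
          simp only [hTf, Set.mem_setOf_eq]
          constructor
          · intro hp
            have hc1 : p.val ≠ 0 ∨ i.val ≠ 2 := by
              by_cases e2 : i.val = 2
              · left; intro hz; exact h2i ⟨e2, hz⟩
              · right; exact e2
            have hc2 : p.val + 1 ≠ n i ∨ i.val ≠ 1 := by
              by_cases e1 : i.val = 1
              · left; intro hz; exact h1i ⟨e1, hz⟩
              · right; exact e1
            refine ⟨⟨if i.val = 2 then p.val - 1 else p.val,
                hmlt p.val p.isLt hc1 hc2⟩, ⟨p, hp, ?_⟩, ?_⟩
            · by_cases e2 : i.val = 2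
              · simp only [if_pos e2]
                have : p.val ≠ 0 := by rcases hc1 with h|h; exact h; exact absurd e2 h
                omega
              · simp only [if_neg e2]
            · by_cases e2 : i.val = 2
              · simp only [if_pos e2]
                have : p.val ≠ 0 := by rcases hc1 with h|h; exact h; exact absurd e2 h
                omega
              · simp only [if_neg e2]
          · rintro ⟨t, ⟨p', hp', hpv'⟩, hpt⟩
            have : p' = p := by
              apply Fin.ext
              rw [hpv', ← hpt]
            rwa [this] at hp'
  let G : {S : ∀ i : Fin k, Set (Fin (n i)) // ValidTuple h0 n S} →
      Fin (n i0) × Fin 3 × (∀ i : Fin k, Set (Fin (m i))) :=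
    fun Sh => (qf Sh, cf Sh, Tf Sh)
  have hG : G = fun Sh => (qf Sh, cf Sh, Tf Sh) := rfl
  have hinj : Function.Injective G := by
    intro Sh Sh' h
    simp only [hG, Prod.mk.injEq] at h
    obtain ⟨hq, hc, hT⟩ := h
    apply Subtype.ext
    funext i
    ext p
    rw [show (p ∈ Sh.1 i) = (p ∈ Sh.val i) from rfl]
    rw [hmem Sh i p, hmem Sh' i p, hq, hc, hT]
  have hcard := Nat.card_le_card_of_injective G hinj
  have hU : Nat.card (Fin (n i0) × Fin 3 × ∀ i : Fin k, Set (Fin (m i)))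
      = n i0 * (3 * 2 ^ (∑ i, m i)) := by
    rw [Nat.card_prod, Nat.card_prod, Nat.card_pi]
    congr 1
    · simp
    · congr 1
      · simp [Nat.card_eq_fintype_card]
      · rw [← Finset.prod_pow_eq_pow_sum]
        exact Finset.prod_congr rfl fun i _ => by simp [Nat.card_eq_fintype_card]
  have hsum : (∑ i ∈ Finset.univ.erase i0, n i) = (∑ i, m i) + 2 := by
    have e1 : (∑ i, m i) = ∑ i ∈ Finset.univ.erase i0, m i := by
      rw [← Finset.add_sum_erase Finset.univ m (Finset.mem_univ i0)]
      simp [hm, hi0]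
    rw [e1]
    set A := Finset.univ.erase i0 with hA
    have h1A : i1 ∈ A := by
      rw [hA, Finset.mem_erase]
      exact ⟨by simp [hi1, hi0, Fin.ext_iff], Finset.mem_univ _⟩
    have h2A : i2 ∈ A.erase i1 := by
      rw [Finset.mem_erase]
      refine ⟨by simp [hi1, hi2, Fin.ext_iff], ?_⟩
      rw [hA, Finset.mem_erase]
      exact ⟨by simp [hi2, hi0, Fin.ext_iff], Finset.mem_univ _⟩
    have peel : ∀ f : Fin k → ℕ, (∑ i ∈ A, f i)
        = f i1 + (f i2 + ∑ i ∈ (A.erase i1).erase i2, f i) := by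
      intro f
      rw [← Finset.add_sum_erase A f h1A, ← Finset.add_sum_erase (A.erase i1) f h2A]
    rw [peel n, peel m]
    have hrest : (∑ i ∈ (A.erase i1).erase i2, m i)
        = ∑ i ∈ (A.erase i1).erase i2, n i := by
      refine Finset.sum_congr rfl fun i hi => ?_
      rw [Finset.mem_erase, Finset.mem_erase] at hi
      obtain ⟨hne2, hne1, hiA⟩ := hi
      rw [hA, Finset.mem_erase] at hiA
      obtain ⟨hne0, -⟩ := hiA
      have v0 : i.val ≠ 0 := fun hc => hne0 (Fin.ext (by simp [hi0, hc]))
      have v1 : i.val ≠ 1 := fun hc => hne1 (Fin.ext (by simp [hi1, hc]))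
      have v2 : i.val ≠ 2 := fun hc => hne2 (Fin.ext (by simp [hi2, hc]))
      simp [hm, v0, v1, v2]
    rw [hrest]
    have hm1 : m i1 = n i1 - 1 := by simp [hm, hi1]
    have hm2 : m i2 = n i2 - 1 := by simp [hm, hi2]
    have := hn i1; have := hn i2
    omega
  calc 4 * Nat.card {S : ∀ i : Fin k, Set (Fin (n i)) // ValidTuple h0 n S}
      ≤ 4 * (n i0 * (3 * 2 ^ (∑ i, m i))) := by
        rw [← hU]; exact Nat.mul_le_mul_left _ hcard
    _ = 3 * (n i0 * 2 ^ ((∑ i, m i) + 2)) := by rw [pow_add]; ring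
    _ = 3 * (n i0 * 2 ^ (∑ i ∈ Finset.univ.erase i0, n i)) := by rw [hsum]

/-- For `k ≥ 3` and `nᵢ ≥ 2`, the number `τ` of valid tuples satisfies
`n₁·2^{n₂+⋯+n_k} ≤ 2^{k−1}·τ` and `4·τ ≤ 3·n₁·2^{n₂+⋯+n_k}`. -/
theorem stmt3 (k : ℕ) (hk : 3 ≤ k) (n : Fin k → ℕ) (hn : ∀ i, 2 ≤ n i) :
    n ⟨0, Nat.lt_of_lt_of_le (Nat.zero_lt_succ 2) hk⟩ *
        2 ^ (∑ i ∈ Finset.univ.erase (⟨0, Nat.lt_of_lt_of_le (Nat.zero_lt_succ 2) hk⟩ : Fin k), n i)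
      ≤ 2 ^ (k - 1) *
        Nat.card {S : ∀ i : Fin k, Set (Fin (n i)) //
          ValidTuple (Nat.lt_of_lt_of_le (Nat.zero_lt_succ 2) hk) n S} ∧
    4 * Nat.card {S : ∀ i : Fin k, Set (Fin (n i)) //
          ValidTuple (Nat.lt_of_lt_of_le (Nat.zero_lt_succ 2) hk) n S}
      ≤ 3 * (n ⟨0, Nat.lt_of_lt_of_le (Nat.zero_lt_succ 2) hk⟩ *
        2 ^ (∑ i ∈ Finset.univ.erase (⟨0, Nat.lt_of_lt_of_le (Nat.zero_lt_succ 2) hk⟩ : Fin k), n i)) := by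
  exact ⟨tau_lower hk n hn _, tau_upper hk n hn _⟩
end

section
/- For every k ≥ 2 and all integers n₁,…,n_k ≥ 2, the number of valid tuples satisfies τ(n₁,…,n_k) = (n₁−1)·U₂ + V₂ = B(n₁,…,n_k). -/
/-- The pair `(Uᵢ, Vᵢ)` computed by the downward recursion of Theorem 3.3 from the list
`[nᵢ, nᵢ₊₁, …, n_k]`:  `U_k = 2^{n_k}`, `V_k = 2^{n_k−1}`, and
`Uᵢ = 1 + (2^{nᵢ−1}−1)·Uᵢ₊₁ + 2^{nᵢ−1}·Vᵢ₊₁`, `Vᵢ = 2^{nᵢ−2}·(Uᵢ₊₁+Vᵢ₊₁)`. -/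
def UV : List ℕ → ℕ × ℕ
  | [] => (1, 1)
  | [m] => (2 ^ m, 2 ^ (m - 1))
  | m :: rest =>
      (1 + (2 ^ (m - 1) - 1) * (UV rest).1 + 2 ^ (m - 1) * (UV rest).2,
       2 ^ (m - 2) * ((UV rest).1 + (UV rest).2))

/-- The chain condition (second half of ValidTuple). -/
def ChainP {k : ℕ} (n : Fin k → ℕ) (S : ∀ i : Fin k, Set (Fin (n i))) : Prop :=
  ∀ i : Fin k, ∀ h : i.val + 1 < k,
    (S i = ∅ → S ⟨i.val + 1, h⟩ = ∅) ∧
    (∀ p : Fin (n i), p.val + 1 = n i → p ∈ S i →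
      ∃ z : Fin (n ⟨i.val + 1, h⟩), z.val = 0 ∧ z ∈ S ⟨i.val + 1, h⟩)

lemma chainP_iff_succ {k : ℕ} (n : Fin (k+1) → ℕ) (S : ∀ i : Fin (k+1), Set (Fin (n i))) :
    ChainP n S ↔ ∀ i : Fin k,
      (S i.castSucc = ∅ → S i.succ = ∅) ∧
      (∀ p : Fin (n i.castSucc), p.val + 1 = n i.castSucc → p ∈ S i.castSucc →
        ∃ z : Fin (n i.succ), z.val = 0 ∧ z ∈ S i.succ) := by
  constructor
  · intro H i
    exact H i.castSucc (Nat.succ_lt_succ i.isLt)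
  · intro H i h
    exact H ⟨i.val, Nat.lt_of_succ_lt_succ h⟩

/-- singleton subsets counting: {S : Set α // x ∈ S} ≃ Set {y // y ≠ x} -/
def memEquiv {α : Type*} (x : α) : {S : Set α // x ∈ S} ≃ Set {y : α // y ≠ x} where
  toFun S := {y | (y : α) ∈ S.1}
  invFun T := ⟨{y | y = x ∨ ∃ h : y ≠ x, (⟨y, h⟩ : {y // y ≠ x}) ∈ T}, Or.inl rfl⟩
  left_inv S := by
    ext y
    by_cases hy : y = x
    · subst hy; simp [S.2]
    · simp [hy]
  right_inv T := by
    ext ⟨y, hy⟩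
    simp [hy]

def notMemEquiv {α : Type*} (x : α) : {S : Set α // x ∉ S} ≃ Set {y : α // y ≠ x} where
  toFun S := {y | (y : α) ∈ S.1}
  invFun T := ⟨{y | ∃ h : y ≠ x, (⟨y, h⟩ : {y // y ≠ x}) ∈ T}, by simp⟩
  left_inv S := by
    ext y
    by_cases hy : y = x
    · subst hy; simp [S.2]
    · simp [hy]
  right_inv T := by
    ext ⟨y, hy⟩
    simp [hy]

lemma card_ne {α : Type*} [Fintype α] [DecidableEq α] (x : α) :
    Fintype.card {y : α // y ≠ x} = Fintype.card α - 1 := by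
  simp [Fintype.card_subtype_compl]

lemma natCard_set {α : Type*} [Fintype α] : Nat.card (Set α) = 2 ^ Fintype.card α := by
  simp [Nat.card_eq_fintype_card]

lemma natCard_set_mem {α : Type*} [Fintype α] [DecidableEq α] (x : α) :
    Nat.card {S : Set α // x ∈ S} = 2 ^ (Fintype.card α - 1) := by
  rw [Nat.card_congr (memEquiv x), natCard_set, card_ne]

lemma natCard_set_not_mem {α : Type*} [Fintype α] [DecidableEq α] (x : α) :
    Nat.card {S : Set α // x ∉ S} = 2 ^ (Fintype.card α - 1) := by
  rw [Nat.card_congr (notMemEquiv x), natCard_set, card_ne]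

lemma natCard_set_mem_mem {α : Type*} [Fintype α] [DecidableEq α] {x y : α} (hxy : y ≠ x) :
    Nat.card {S : Set α // x ∈ S ∧ y ∈ S} = 2 ^ (Fintype.card α - 2) := by
  have e1 : {S : Set α // x ∈ S ∧ y ∈ S} ≃ {p : {S : Set α // x ∈ S} // y ∈ p.1} :=
    (Equiv.subtypeSubtypeEquivSubtypeInter (fun S : Set α => x ∈ S) (fun S => y ∈ S)).symm
  have e2 : {p : {S : Set α // x ∈ S} // y ∈ p.1} ≃
      {T : Set {z : α // z ≠ x} // (⟨y, hxy⟩ : {z : α // z ≠ x}) ∈ T} :=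
    (memEquiv x).subtypeEquiv (fun S => Iff.rfl)
  rw [Nat.card_congr (e1.trans e2), natCard_set_mem, card_ne]; rw [Nat.sub_sub]

lemma natCard_set_mem_not_mem {α : Type*} [Fintype α] [DecidableEq α] {x y : α} (hxy : y ≠ x) :
    Nat.card {S : Set α // x ∈ S ∧ y ∉ S} = 2 ^ (Fintype.card α - 2) := by
  have e1 : {S : Set α // x ∈ S ∧ y ∉ S} ≃ {p : {S : Set α // x ∈ S} // y ∉ p.1} :=
    (Equiv.subtypeSubtypeEquivSubtypeInter (fun S : Set α => x ∈ S) (fun S => y ∉ S)).symm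
  have e2 : {p : {S : Set α // x ∈ S} // y ∉ p.1} ≃
      {T : Set {z : α // z ≠ x} // (⟨y, hxy⟩ : {z : α // z ≠ x}) ∉ T} :=
    (memEquiv x).subtypeEquiv (fun S => Iff.rfl)
  rw [Nat.card_congr (e1.trans e2), natCard_set_not_mem, card_ne]; rw [Nat.sub_sub]

lemma chainP_cons {j : ℕ} (m : Fin (j+2) → ℕ) (a : Set (Fin (m 0)))
    (S' : ∀ i : Fin (j+1), Set (Fin (m i.succ))) :
    ChainP m (Fin.cons a S') ↔
      ChainP (fun i : Fin (j+1) => m i.succ) S' ∧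
      (a = ∅ → S' 0 = ∅) ∧
      (∀ p : Fin (m 0), p.val + 1 = m 0 → p ∈ a →
        ∃ z : Fin (m (0 : Fin (j+1)).succ), z.val = 0 ∧ z ∈ S' 0) := by
  rw [chainP_iff_succ, chainP_iff_succ (fun i : Fin (j+1) => m i.succ) S']
  constructor
  · intro H
    refine ⟨fun i => ?_, fun ha => ?_, fun p hp hpa => ?_⟩
    · have := H i.succ
      simpa [Fin.cons_succ] using this
    · have := (H 0).1
      simpa [Fin.cons_zero, Fin.cons_succ, ha] using this ha
    · have := (H 0).2
      simp only [Fin.castSucc_zero, Fin.cons_zero, Fin.succ_zero_eq_one] at this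
      simpa [Fin.cons_succ] using this p hp hpa
  · rintro ⟨H, h1, h2⟩ i
    refine Fin.cases ?_ ?_ i
    · constructor
      · intro ha
        simp only [Fin.castSucc_zero, Fin.cons_zero] at ha
        simpa [Fin.cons_succ] using h1 ha
      · intro p hp hpa
        simp only [Fin.castSucc_zero, Fin.cons_zero] at hpa hp
        simpa [Fin.cons_succ] using h2 p hp hpa
    · intro i'
      have := H i'
      constructor
      · intro ha
        simp only [Fin.succ_castSucc] at *
        simpa [Fin.cons_succ] using this.1 (by simpa [Fin.cons_succ] using ha)
      · intro p hp hpa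
        simp only [Fin.succ_castSucc] at *
        simpa [Fin.cons_succ] using this.2 p (by simpa using hp) (by simpa [Fin.cons_succ] using hpa)

lemma chainP_all_empty {j : ℕ} {m : Fin (j+1) → ℕ} {S : ∀ i : Fin (j+1), Set (Fin (m i))}
    (hC : ChainP m S) (h0 : S 0 = ∅) : ∀ i, S i = ∅ := by
  rw [chainP_iff_succ] at hC
  intro i
  induction i using Fin.induction with
  | zero => exact h0
  | succ i' ih => exact (hC i').1 ih

lemma chainP_const_empty {j : ℕ} (m : Fin (j+1) → ℕ) :
    ChainP m (fun _ => (∅ : Set _)) := by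
  rw [chainP_iff_succ]
  intro i
  exact ⟨fun _ => rfl, fun p hp hpa => absurd hpa (by simp)⟩

lemma natCard_sigma' {ι : Type*} [Fintype ι] (F : ι → Type*) [∀ i, Finite (F i)] :
    Nat.card (Σ i, F i) = ∑ i, Nat.card (F i) := by
  letI : ∀ i, Fintype (F i) := fun i => Fintype.ofFinite _
  simp [Nat.card_eq_fintype_card]

lemma natCard_cons_sum {j : ℕ} (m : Fin (j+2) → ℕ)
    (Q : (∀ i : Fin (j+2), Set (Fin (m i))) → Prop) :
    Nat.card {S : ∀ i : Fin (j+2), Set (Fin (m i)) // Q S}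
      = ∑ a : Set (Fin (m 0)),
          Nat.card {S' : ∀ i : Fin (j+1), Set (Fin (m i.succ)) // Q (Fin.cons a S')} := by
  have e1 : {p : Set (Fin (m 0)) × (∀ i : Fin (j+1), Set (Fin (m i.succ))) //
        Q (Fin.cons p.1 p.2)} ≃ {S : ∀ i : Fin (j+2), Set (Fin (m i)) // Q S} :=
    (Fin.consEquiv (fun i => Set (Fin (m i)))).subtypeEquiv (fun p => Iff.rfl)
  rw [← Nat.card_congr e1,
    Nat.card_congr (Equiv.subtypeProdEquivSigmaSubtype (fun a S' => Q (Fin.cons a S'))),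
    natCard_sigma']

lemma exists_zero_mem_iff {M : ℕ} (hM : 0 < M) (a : Set (Fin M)) :
    (∃ z : Fin M, z.val = 0 ∧ z ∈ a) ↔ (⟨0, hM⟩ : Fin M) ∈ a := by
  constructor
  · rintro ⟨z, h1, h2⟩
    have : z = ⟨0, hM⟩ := Fin.ext h1
    rwa [this] at h2
  · intro h; exact ⟨_, rfl, h⟩

lemma UV_cons (x : ℕ) (l : List ℕ) (hl : l ≠ []) :
    UV (x :: l) = (1 + (2 ^ (x - 1) - 1) * (UV l).1 + 2 ^ (x - 1) * (UV l).2,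
      2 ^ (x - 2) * ((UV l).1 + (UV l).2)) := by
  cases l with
  | nil => simp at hl
  | cons y ys => rfl

lemma sum_ite_mem_empty {α : Type*} [Fintype α] [DecidableEq α] (x : α) (U V : ℕ)
    [D1 : ∀ a : Set α, Decidable (x ∈ a)] [D2 : DecidableEq (Set α)] :
    (∑ a : Set α, if x ∈ a then V else if a = ∅ then 1 else U)
      = 2 ^ (Fintype.card α - 1) * V + (1 + (2 ^ (Fintype.card α - 1) - 1) * U) := by
  have c1 : (Finset.univ.filter (fun a : Set α => x ∈ a)).card = 2 ^ (Fintype.card α - 1) := by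
    rw [← Fintype.card_subtype, ← Nat.card_eq_fintype_card, natCard_set_mem]
  have c2 : (Finset.univ.filter (fun a : Set α => ¬ x ∈ a)).card = 2 ^ (Fintype.card α - 1) := by
    rw [← Fintype.card_subtype, ← Nat.card_eq_fintype_card, natCard_set_not_mem]
  rw [Finset.sum_ite]
  rw [Finset.sum_const, c1, smul_eq_mul]
  congr 1
  rw [Finset.sum_ite]
  have hemp : (∅ : Set α) ∈ Finset.univ.filter (fun a : Set α => ¬ x ∈ a) := by simp
  rw [Finset.filter_eq' _ (∅ : Set α), if_pos hemp, Finset.filter_ne']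
  rw [Finset.sum_const, Finset.sum_const, Finset.card_erase_of_mem hemp, c2]
  simp

lemma sum_ite_mem_mem {α : Type*} [Fintype α] [DecidableEq α] {x y : α} (hxy : y ≠ x) (U V : ℕ)
    [D1 : ∀ a : Set α, Decidable (x ∈ a)] [D2 : ∀ a : Set α, Decidable (y ∈ a)] :
    (∑ a : Set α, if x ∈ a then (if y ∈ a then V else U) else 0)
      = 2 ^ (Fintype.card α - 2) * (U + V) := by
  rw [← Finset.sum_filter, Finset.sum_ite, Finset.sum_const, Finset.sum_const,
    Finset.filter_filter, Finset.filter_filter]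
  have c1 : (Finset.univ.filter (fun a : Set α => x ∈ a ∧ y ∈ a)).card
      = 2 ^ (Fintype.card α - 2) := by
    rw [← Fintype.card_subtype, ← Nat.card_eq_fintype_card, natCard_set_mem_mem hxy]
  have c2 : (Finset.univ.filter (fun a : Set α => x ∈ a ∧ ¬ y ∈ a)).card
      = 2 ^ (Fintype.card α - 2) := by
    rw [← Fintype.card_subtype, ← Nat.card_eq_fintype_card, natCard_set_mem_not_mem hxy]
  rw [c1, c2, smul_eq_mul, smul_eq_mul, Nat.mul_add, Nat.add_comm]

lemma sum_singletons {α : Type*} [Fintype α] [DecidableEq α] (x : α) (U V : ℕ)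
    [D1 : ∀ a : Set α, Decidable (x ∈ a)] [D3 : ∀ a : Set α, Decidable (∃ q, a = {q})] :
    (∑ a : Set α, if ∃ q, a = {q} then (if x ∈ a then V else U) else 0)
      = (Fintype.card α - 1) * U + V := by
  classical
  rw [← Finset.sum_filter]
  have himg : (Finset.univ.filter (fun a : Set α => ∃ q, a = {q}))
      = Finset.univ.image (fun q : α => ({q} : Set α)) := by
    ext a; simp [eq_comm]
  rw [himg, Finset.sum_image (fun p _ q _ h => Set.singleton_injective h)]
  have : ∀ q : α, (if x ∈ ({q} : Set α) then V else U) = if x = q then V else U := by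
    intro q; simp [Set.mem_singleton_iff]
  rw [Finset.sum_congr rfl (fun q _ => this q), Finset.sum_ite, Finset.sum_const,
    Finset.sum_const, Finset.filter_eq, if_pos (Finset.mem_univ x), Finset.filter_ne,
    Finset.card_erase_of_mem (Finset.mem_univ x)]
  simp [Nat.add_comm, Finset.card_univ]

lemma main_count (j : ℕ) : ∀ (m : Fin (j+1) → ℕ), (∀ i, 2 ≤ m i) →
    Nat.card {S : ∀ i : Fin (j+1), Set (Fin (m i)) // ChainP m S} = (UV (List.ofFn m)).1 ∧
    Nat.card {S : ∀ i : Fin (j+1), Set (Fin (m i)) // ChainP m S ∧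
        ∃ z : Fin (m 0), z.val = 0 ∧ z ∈ S 0} = (UV (List.ofFn m)).2 := by
  induction j with
  | zero =>
    intro m hm
    have htriv : ∀ S : ∀ i : Fin 1, Set (Fin (m i)), ChainP m S := fun S i h => absurd h (by omega)
    have hofn : List.ofFn m = [m 0] := by simp [List.ofFn_succ]
    have hUV : UV (List.ofFn m) = (2 ^ m 0, 2 ^ (m 0 - 1)) := by rw [hofn]; rfl
    constructor
    · rw [Nat.card_congr ((Equiv.subtypeUnivEquiv htriv).trans (Equiv.piUnique _)), hUV,
        natCard_set]
      simp
    · have h0 : 0 < m 0 := by have := hm 0; omega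
      have e : {S : ∀ i : Fin 1, Set (Fin (m i)) // ChainP m S ∧
            ∃ z : Fin (m 0), z.val = 0 ∧ z ∈ S 0}
          ≃ {a : Set (Fin (m 0)) // (⟨0, h0⟩ : Fin (m 0)) ∈ a} :=
        (Equiv.subtypeEquivRight (fun S =>
          (and_iff_right (htriv S)).trans (exists_zero_mem_iff h0 (S 0)))).trans
          ((Equiv.piUnique _).subtypeEquiv (fun S => Iff.rfl))
      rw [Nat.card_congr e, natCard_set_mem, hUV]
      simp
  | succ j ih =>
    intro m hm
    classical
    obtain ⟨hU', hV'⟩ := ih (fun i => m i.succ) (fun i => hm i.succ)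
    have hM : 2 ≤ m 0 := hm 0
    have hlt0 : 0 < m 0 := Nat.lt_of_lt_of_le Nat.zero_lt_two hM
    have hlt : m 0 - 1 < m 0 := Nat.sub_lt hlt0 Nat.one_pos
    have hne : List.ofFn (fun i : Fin (j+1) => m i.succ) ≠ [] := by
      rw [List.ofFn_succ]; exact List.cons_ne_nil _ _
    have hUV : UV (List.ofFn m)
        = (1 + (2 ^ (m 0 - 1) - 1) * (UV (List.ofFn fun i : Fin (j+1) => m i.succ)).1
            + 2 ^ (m 0 - 1) * (UV (List.ofFn fun i : Fin (j+1) => m i.succ)).2,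
          2 ^ (m 0 - 2) * ((UV (List.ofFn fun i : Fin (j+1) => m i.succ)).1
            + (UV (List.ofFn fun i : Fin (j+1) => m i.succ)).2)) := by
      rw [List.ofFn_succ, UV_cons _ _ hne]
    -- fiber computation for the U statement
    have hfibU : ∀ a : Set (Fin (m 0)),
        Nat.card {S' : ∀ i : Fin (j+1), Set (Fin (m i.succ)) // ChainP m (Fin.cons a S')}
          = if (⟨m 0 - 1, hlt⟩ : Fin (m 0)) ∈ a
              then (UV (List.ofFn fun i : Fin (j+1) => m i.succ)).2
              else if a = ∅ then 1 else (UV (List.ofFn fun i : Fin (j+1) => m i.succ)).1 := by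
      intro a
      by_cases h1 : (⟨m 0 - 1, hlt⟩ : Fin (m 0)) ∈ a
      · rw [if_pos h1]
        have e : {S' : ∀ i : Fin (j+1), Set (Fin (m i.succ)) // ChainP m (Fin.cons a S')}
            ≃ {S' : ∀ i : Fin (j+1), Set (Fin (m i.succ)) //
                ChainP (fun i : Fin (j+1) => m i.succ) S' ∧
                ∃ z : Fin (m (0 : Fin (j+1)).succ), z.val = 0 ∧ z ∈ S' 0} :=
          Equiv.subtypeEquivRight (fun S' => by
            rw [chainP_cons]
            constructor
            · rintro ⟨hc, -, h3⟩
              exact ⟨hc, h3 ⟨m 0 - 1, hlt⟩ (Nat.sub_add_cancel hlt0) h1⟩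
            · rintro ⟨hc, hz⟩
              exact ⟨hc, fun ha => absurd ha (by
                  intro ha'; rw [ha'] at h1; exact h1),
                fun p hp hpa => hz⟩)
        rw [Nat.card_congr e]; exact hV'
      · rw [if_neg h1]
        by_cases h2 : a = ∅
        · rw [if_pos h2]; subst h2
          have e : {S' : ∀ i : Fin (j+1), Set (Fin (m i.succ)) //
                ChainP m (Fin.cons (∅ : Set (Fin (m 0))) S')}
              ≃ {S' : ∀ i : Fin (j+1), Set (Fin (m i.succ)) //
                  ChainP (fun i : Fin (j+1) => m i.succ) S' ∧ S' 0 = ∅} :=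
            Equiv.subtypeEquivRight (fun S' => by
              rw [chainP_cons]
              constructor
              · rintro ⟨hc, h2', -⟩; exact ⟨hc, h2' rfl⟩
              · rintro ⟨hc, h0⟩
                exact ⟨hc, fun _ => h0, fun p hp hpa => absurd hpa (by simp)⟩)
          rw [Nat.card_congr e]
          haveI : Unique {S' : ∀ i : Fin (j+1), Set (Fin (m i.succ)) //
              ChainP (fun i : Fin (j+1) => m i.succ) S' ∧ S' 0 = ∅} :=
            { default := ⟨fun _ => ∅, chainP_const_empty _, rfl⟩
              uniq := fun S => Subtype.ext (funext fun i =>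
                (chainP_all_empty S.2.1 S.2.2 i)) }
          exact Nat.card_unique
        · rw [if_neg h2]
          have e : {S' : ∀ i : Fin (j+1), Set (Fin (m i.succ)) // ChainP m (Fin.cons a S')}
              ≃ {S' : ∀ i : Fin (j+1), Set (Fin (m i.succ)) //
                  ChainP (fun i : Fin (j+1) => m i.succ) S'} :=
            Equiv.subtypeEquivRight (fun S' => by
              rw [chainP_cons]
              constructor
              · exact fun h => h.1
              · intro hc
                refine ⟨hc, fun ha => absurd ha h2, fun p hp hpa => ?_⟩
                exfalso
                have hpl : p = ⟨m 0 - 1, hlt⟩ := Fin.ext (by clear * - hp; simp; omega)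
                exact h1 (hpl ▸ hpa))
          rw [Nat.card_congr e]; exact hU'
    constructor
    · rw [natCard_cons_sum m (fun S => ChainP m S)]
      rw [Finset.sum_congr rfl (fun a _ => hfibU a)]
      rw [sum_ite_mem_empty _ _ _, hUV]
      simp only [Fintype.card_fin]
      rw [add_comm]
    · rw [natCard_cons_sum m (fun S => ChainP m S ∧ ∃ z : Fin (m 0), z.val = 0 ∧ z ∈ S 0)]
      have hfibV : ∀ a : Set (Fin (m 0)),
          Nat.card {S' : ∀ i : Fin (j+1), Set (Fin (m i.succ)) //
              ChainP m (Fin.cons a S') ∧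
              ∃ z : Fin (m 0), z.val = 0 ∧ z ∈ (Fin.cons a S' : ∀ i : Fin (j+2), Set (Fin (m i))) 0}
            = if (⟨0, hlt0⟩ : Fin (m 0)) ∈ a
                then (if (⟨m 0 - 1, hlt⟩ : Fin (m 0)) ∈ a
                  then (UV (List.ofFn fun i : Fin (j+1) => m i.succ)).2
                  else (UV (List.ofFn fun i : Fin (j+1) => m i.succ)).1)
                else 0 := by
        intro a
        have hz0 : 0 < m 0 := hlt0
        have hcons0 : ∀ S' : ∀ i : Fin (j+1), Set (Fin (m i.succ)),
            (Fin.cons a S' : ∀ i : Fin (j+2), Set (Fin (m i))) 0 = a := fun S' => rfl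
        by_cases h0 : (⟨0, hlt0⟩ : Fin (m 0)) ∈ a
        · rw [if_pos h0]
          have hne' : a ≠ ∅ := by intro ha'; rw [ha'] at h0; exact h0
          by_cases h1 : (⟨m 0 - 1, hlt⟩ : Fin (m 0)) ∈ a
          · rw [if_pos h1]
            have e : {S' : ∀ i : Fin (j+1), Set (Fin (m i.succ)) //
                  ChainP m (Fin.cons a S') ∧
                  ∃ z : Fin (m 0), z.val = 0 ∧ z ∈ (Fin.cons a S' : ∀ i : Fin (j+2), Set (Fin (m i))) 0}
                ≃ {S' : ∀ i : Fin (j+1), Set (Fin (m i.succ)) //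
                    ChainP (fun i : Fin (j+1) => m i.succ) S' ∧
                    ∃ z : Fin (m (0 : Fin (j+1)).succ), z.val = 0 ∧ z ∈ S' 0} :=
              Equiv.subtypeEquivRight (fun S' => by
                rw [hcons0, chainP_cons]
                constructor
                · rintro ⟨⟨hc, -, h3⟩, -⟩
                  exact ⟨hc, h3 ⟨m 0 - 1, hlt⟩ (Nat.sub_add_cancel hlt0) h1⟩
                · rintro ⟨hc, hz⟩
                  exact ⟨⟨hc, fun ha => absurd ha hne', fun p hp hpa => hz⟩,
                    ⟨⟨0, hz0⟩, rfl, h0⟩⟩)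
            rw [Nat.card_congr e]; exact hV'
          · rw [if_neg h1]
            have e : {S' : ∀ i : Fin (j+1), Set (Fin (m i.succ)) //
                  ChainP m (Fin.cons a S') ∧
                  ∃ z : Fin (m 0), z.val = 0 ∧ z ∈ (Fin.cons a S' : ∀ i : Fin (j+2), Set (Fin (m i))) 0}
                ≃ {S' : ∀ i : Fin (j+1), Set (Fin (m i.succ)) //
                    ChainP (fun i : Fin (j+1) => m i.succ) S'} :=
              Equiv.subtypeEquivRight (fun S' => by
                rw [hcons0, chainP_cons]
                constructor
                · rintro ⟨⟨hc, -, -⟩, -⟩; exact hc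
                · intro hc
                  refine ⟨⟨hc, fun ha => absurd ha hne', fun p hp hpa => ?_⟩,
                    ⟨⟨0, hz0⟩, rfl, h0⟩⟩
                  exfalso
                  have hpl : p = ⟨m 0 - 1, hlt⟩ := Fin.ext (by clear * - hp; simp; omega)
                  exact h1 (hpl ▸ hpa))
            rw [Nat.card_congr e]; exact hU'
        · rw [if_neg h0]
          haveI : IsEmpty {S' : ∀ i : Fin (j+1), Set (Fin (m i.succ)) //
              ChainP m (Fin.cons a S') ∧
              ∃ z : Fin (m 0), z.val = 0 ∧ z ∈ (Fin.cons a S' : ∀ i : Fin (j+2), Set (Fin (m i))) 0} := by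
            constructor
            rintro ⟨S', -, z, hz1, hz2⟩
            rw [hcons0] at hz2
            have : z = ⟨0, hz0⟩ := Fin.ext hz1
            rw [this] at hz2
            exact h0 hz2
          exact Nat.card_of_isEmpty
      rw [Finset.sum_congr rfl (fun a _ => hfibV a)]
      have hne01 : (⟨m 0 - 1, hlt⟩ : Fin (m 0)) ≠ (⟨0, hlt0⟩ : Fin (m 0)) := by
        intro h; have h2 := congrArg Fin.val h; clear * - h2 hM; simp at h2; omega
      rw [sum_ite_mem_mem hne01 _ _, hUV]
      simp only [Fintype.card_fin]


/-- For `k ≥ 2` and `nᵢ ≥ 2`, the number of valid tuples equals `(n₁−1)·U₂ + V₂`. -/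
theorem stmt4 (k : ℕ) (hk : 2 ≤ k) (n : Fin k → ℕ) (hn : ∀ i, 2 ≤ n i) :
    Nat.card {S : ∀ i : Fin k, Set (Fin (n i)) //
        ValidTuple (Nat.lt_of_lt_of_le Nat.zero_lt_two hk) n S}
      = (n ⟨0, Nat.lt_of_lt_of_le Nat.zero_lt_two hk⟩ - 1) * (UV ((List.ofFn n).drop 1)).1
        + (UV ((List.ofFn n).drop 1)).2 := by
  obtain ⟨j, rfl⟩ : ∃ j, k = j + 2 := ⟨k - 2, by omega⟩
  classical
  have hM : 2 ≤ n 0 := hn 0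
  have hlt0 : 0 < n 0 := Nat.lt_of_lt_of_le Nat.zero_lt_two hM
  have hlt : n 0 - 1 < n 0 := Nat.sub_lt hlt0 Nat.one_pos
  obtain ⟨hU', hV'⟩ := main_count j (fun i => n i.succ) (fun i => hn i.succ)
  have hdrop : (List.ofFn n).drop 1 = List.ofFn (fun i : Fin (j+1) => n i.succ) := by
    rw [List.ofFn_succ, List.drop_succ_cons, List.drop_zero]
  have hvalid : ∀ S : ∀ i : Fin (j+2), Set (Fin (n i)),
      ValidTuple (Nat.lt_of_lt_of_le Nat.zero_lt_two hk) n S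
        ↔ ((∃ q, S 0 = {q}) ∧ ChainP n S) := fun S => Iff.rfl
  rw [Nat.card_congr (Equiv.subtypeEquivRight hvalid),
    natCard_cons_sum n (fun S => (∃ q, S 0 = {q}) ∧ ChainP n S)]
  have hfib : ∀ a : Set (Fin (n 0)),
      Nat.card {S' : ∀ i : Fin (j+1), Set (Fin (n i.succ)) //
          (∃ q, (Fin.cons a S' : ∀ i : Fin (j+2), Set (Fin (n i))) 0 = {q})
            ∧ ChainP n (Fin.cons a S')}
        = if ∃ q, a = {q}
            then (if (⟨n 0 - 1, hlt⟩ : Fin (n 0)) ∈ a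
              then (UV (List.ofFn fun i : Fin (j+1) => n i.succ)).2
              else (UV (List.ofFn fun i : Fin (j+1) => n i.succ)).1)
            else 0 := by
    intro a
    have hcons0 : ∀ S' : ∀ i : Fin (j+1), Set (Fin (n i.succ)),
        (Fin.cons a S' : ∀ i : Fin (j+2), Set (Fin (n i))) 0 = a := fun S' => rfl
    by_cases hs : ∃ q, a = {q}
    · rw [if_pos hs]
      obtain ⟨q, rfl⟩ := hs
      have hane : ({q} : Set (Fin (n 0))) ≠ ∅ := Set.singleton_ne_empty q
      by_cases h1 : (⟨n 0 - 1, hlt⟩ : Fin (n 0)) ∈ ({q} : Set (Fin (n 0)))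
      · rw [if_pos h1]
        have e : {S' : ∀ i : Fin (j+1), Set (Fin (n i.succ)) //
              (∃ q', (Fin.cons ({q} : Set (Fin (n 0))) S' : ∀ i : Fin (j+2), Set (Fin (n i))) 0 = {q'})
                ∧ ChainP n (Fin.cons ({q} : Set (Fin (n 0))) S')}
            ≃ {S' : ∀ i : Fin (j+1), Set (Fin (n i.succ)) //
                ChainP (fun i : Fin (j+1) => n i.succ) S' ∧
                ∃ z : Fin (n (0 : Fin (j+1)).succ), z.val = 0 ∧ z ∈ S' 0} :=
          Equiv.subtypeEquivRight (fun S' => by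
            rw [hcons0, chainP_cons]
            constructor
            · rintro ⟨-, hc, -, h3⟩
              exact ⟨hc, h3 ⟨n 0 - 1, hlt⟩ (Nat.sub_add_cancel hlt0) h1⟩
            · rintro ⟨hc, hz⟩
              exact ⟨⟨q, rfl⟩, hc, fun ha => absurd ha hane, fun p hp hpa => hz⟩)
        rw [Nat.card_congr e]; exact hV'
      · rw [if_neg h1]
        have e : {S' : ∀ i : Fin (j+1), Set (Fin (n i.succ)) //
              (∃ q', (Fin.cons ({q} : Set (Fin (n 0))) S' : ∀ i : Fin (j+2), Set (Fin (n i))) 0 = {q'})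
                ∧ ChainP n (Fin.cons ({q} : Set (Fin (n 0))) S')}
            ≃ {S' : ∀ i : Fin (j+1), Set (Fin (n i.succ)) //
                ChainP (fun i : Fin (j+1) => n i.succ) S'} :=
          Equiv.subtypeEquivRight (fun S' => by
            rw [hcons0, chainP_cons]
            constructor
            · rintro ⟨-, hc, -, -⟩; exact hc
            · intro hc
              refine ⟨⟨q, rfl⟩, hc, fun ha => absurd ha hane, fun p hp hpa => ?_⟩
              exfalso
              have hpl : p = ⟨n 0 - 1, hlt⟩ := Fin.ext (by clear * - hp; simp; omega)
              exact h1 (hpl ▸ hpa))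
        rw [Nat.card_congr e]; exact hU'
    · rw [if_neg hs]
      haveI : IsEmpty {S' : ∀ i : Fin (j+1), Set (Fin (n i.succ)) //
          (∃ q, (Fin.cons a S' : ∀ i : Fin (j+2), Set (Fin (n i))) 0 = {q})
            ∧ ChainP n (Fin.cons a S')} := by
        constructor
        rintro ⟨S', ⟨q, hq⟩, -⟩
        rw [hcons0] at hq
        exact hs ⟨q, hq⟩
      exact Nat.card_of_isEmpty
  rw [Finset.sum_congr rfl (fun a _ => hfib a)]
  rw [sum_singletons _ _ _, hdrop]
  simp only [Fintype.card_fin, Fin.mk_zero]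
end

section
/- Let m, n ≥ 3 and let N be the NFA over the two-letter alphabet {α, β} with state set Fin m ⊕ Fin n, accepting set {inr (n−1)}, and the following transitions: on α, each state inl q goes to inl (q+1 mod m), with one extra transition from inl (m−2) to inr 0, and each state inr q goes to inr q; on β, each state inl q goes to inl q, with one extra transition from inl (m−1) to inr 0, and each state inr q goes to inr (q+1 mod n). Then for every nonempty subset S ⊆ Fin n there exists a word w over {α, β} such that (i) N.evalFrom {inl 0, inr 0} w = {inl 0} ∪ {inr q : q ∈ S}, and (ii) if n−1 ∉ S, then for every prefix u of w the set N.evalFrom {inl 0, inr 0} u does not contain inr (n−1). -/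
/-- The NFA of Lemma 4.2 over the two-letter alphabet `{α, β}` (encoded as `Bool`, with
`α = false` and `β = true`) with state set `Fin m ⊕ Fin n` and accepting set `{inr (n−1)}`:
on `α`, `inl q ↦ inl (q+1 mod m)` (with an extra transition `inl (m−2) → inr 0`) and
`inr q ↦ inr q`; on `β`, `inl q ↦ inl q` (with an extra transition `inl (m−1) → inr 0`) and
`inr q ↦ inr (q+1 mod n)`. -/
def concatNFA (m n : ℕ) (hm : 3 ≤ m) (hn : 3 ≤ n) : NFA Bool (Fin m ⊕ Fin n) :=
  haveI : NeZero m := ⟨by omega⟩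
  haveI : NeZero n := ⟨by omega⟩
  { step := fun s c =>
      match s, c with
      | Sum.inl q, false => {Sum.inl (q + 1)} ∪ (if q.val = m - 2 then {Sum.inr 0} else ∅)
      | Sum.inl q, true  => {Sum.inl q} ∪ (if q.val = m - 1 then {Sum.inr 0} else ∅)
      | Sum.inr q, false => {Sum.inr q}
      | Sum.inr q, true  => {Sum.inr (q + 1)}
    start := {Sum.inl 0, Sum.inr 0}
    accept := {Sum.inr ⟨n - 1, by omega⟩} }

namespace Stmt7Aux

variable {m n : ℕ}

/-- configuration -/
def C (k : Fin m) (T : Set (Fin n)) : Set (Fin m ⊕ Fin n) :=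
  {Sum.inl k} ∪ Sum.inr '' T

lemma evalFrom_app (N : NFA Bool (Fin m ⊕ Fin n)) (S : Set (Fin m ⊕ Fin n)) (x y : List Bool) :
    N.evalFrom S (x ++ y) = N.evalFrom (N.evalFrom S x) y :=
  List.foldl_append

variable [NeZero m] [NeZero n] (hm : 3 ≤ m) (hn : 3 ≤ n)

lemma step_false (k : Fin m) (T : Set (Fin n)) :
    (concatNFA m n hm hn).stepSet (C k T) false
      = C (k + 1) (if k.val = m - 2 then insert (0:Fin n) T else T) := by
  ext s
  simp only [NFA.mem_stepSet, C, Set.mem_union, Set.mem_singleton_iff, Set.mem_image]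
  constructor
  · rintro ⟨t, (rfl | ⟨v, hv, rfl⟩), hs⟩
    · simp only [concatNFA] at hs
      rcases hs with h | h
      · exact Or.inl h
      · split_ifs at h with hk
        · simp only [Set.mem_singleton_iff] at h
          subst h
          refine Or.inr ⟨0, by simp [hk, Fin.ext_iff], rfl⟩
        · simp at h
    · simp only [concatNFA, Set.mem_singleton_iff] at hs
      subst hs
      refine Or.inr ⟨v, by split_ifs <;> simp [hv], rfl⟩
  · rintro (rfl | ⟨v, hv, rfl⟩)
    · exact ⟨Sum.inl k, Or.inl rfl, by simp [concatNFA]⟩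
    · split_ifs at hv with hk
      · rcases Set.mem_insert_iff.mp hv with rfl | hv
        · exact ⟨Sum.inl k, Or.inl rfl, by simp [concatNFA, hk, Fin.ext_iff]⟩
        · exact ⟨Sum.inr v, Or.inr ⟨v, hv, rfl⟩, by simp [concatNFA]⟩
      · exact ⟨Sum.inr v, Or.inr ⟨v, hv, rfl⟩, by simp [concatNFA]⟩

lemma step_true (k : Fin m) (T : Set (Fin n)) :
    (concatNFA m n hm hn).stepSet (C k T) true
      = C k ((fun a => a + 1) '' T ∪ if k.val = m - 1 then ({0} : Set (Fin n)) else ∅) := by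
  ext s
  simp only [NFA.mem_stepSet, C, Set.mem_union, Set.mem_singleton_iff, Set.mem_image]
  constructor
  · rintro ⟨t, (rfl | ⟨v, hv, rfl⟩), hs⟩
    · simp only [concatNFA] at hs
      rcases hs with h | h
      · exact Or.inl h
      · split_ifs at h with hk
        · simp only [Set.mem_singleton_iff] at h
          subst h
          refine Or.inr ⟨0, Or.inr (by simp [hk, Fin.ext_iff]), rfl⟩
        · simp at h
    · simp only [concatNFA, Set.mem_singleton_iff] at hs
      subst hs
      exact Or.inr ⟨v + 1, Or.inl ⟨v, hv, rfl⟩, rfl⟩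
  · rintro (rfl | ⟨v, hv, rfl⟩)
    · exact ⟨Sum.inl k, Or.inl rfl, by simp [concatNFA]⟩
    · rcases hv with ⟨a, ha, rfl⟩ | hv
      · exact ⟨Sum.inr a, Or.inr ⟨a, ha, rfl⟩, by simp [concatNFA]⟩
      · split_ifs at hv with hk
        · simp only [Set.mem_singleton_iff] at hv
          subst hv
          exact ⟨Sum.inl k, Or.inl rfl, by simp [concatNFA, hk, Fin.ext_iff]⟩
        · simp at hv

end Stmt7Aux

namespace Stmt7Aux

variable {m n : ℕ} [NeZero m] [NeZero n] (hm : 3 ≤ m) (hn : 3 ≤ n)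

open Fin.NatCast

set_option linter.unusedSectionVars false

lemma val_add_cast (v : Fin n) (j : ℕ) (h : v.val + j < n) :
    (v + (j : Fin n)).val = v.val + j := by
  have hj : j < n := by omega
  rw [Fin.val_add, Fin.val_natCast, Nat.mod_eq_of_lt hj, Nat.mod_eq_of_lt h]

lemma val_add_one (v : Fin n) (h : v.val + 1 < n) : (v + 1).val = v.val + 1 := by
  have := val_add_cast v 1 h
  rwa [Nat.cast_one] at this

lemma eval_trues (j : ℕ) (T : Set (Fin n)) :
    (concatNFA m n hm hn).evalFrom (C (0 : Fin m) T) (List.replicate j true)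
      = C 0 ((fun a => a + (j : Fin n)) '' T) := by
  induction j with
  | zero => simp [NFA.evalFrom]
  | succ j ih =>
      rw [List.replicate_succ', evalFrom_app, ih, NFA.evalFrom_singleton,
        step_true hm hn]
      have h0 : (0 : Fin m).val ≠ m - 1 := by
        simp only [Fin.val_zero]; omega
      simp only [if_neg h0, Set.union_empty, Set.image_image]
      have hf : (fun x : Fin n => x + (j : Fin n) + 1) = fun a : Fin n => a + ((j + 1 : ℕ) : Fin n) := by
        funext a; rw [Nat.cast_succ, add_assoc]
      rw [hf]

lemma eval_falses (j : ℕ) (hj : j ≤ m) (T : Set (Fin n)) :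
    (concatNFA m n hm hn).evalFrom (C (0 : Fin m) T) (List.replicate j false)
      = C (j : Fin m) (if m - 1 ≤ j then insert (0 : Fin n) T else T) := by
  induction j with
  | zero =>
      have : ¬ (m - 1 ≤ 0) := by omega
      simp [NFA.evalFrom, this]
  | succ j ih =>
      rw [List.replicate_succ', evalFrom_app, ih (by omega), NFA.evalFrom_singleton,
        step_false hm hn]
      have hjv : ((j : Fin m)).val = j := by
        rw [Fin.val_natCast, Nat.mod_eq_of_lt (by omega)]
      have hcast : ((j : Fin m)) + 1 = ((j + 1 : ℕ) : Fin m) := by push_cast; ring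
      rw [hcast]
      simp only [hjv]
      by_cases h2 : j = m - 2
      · rw [if_neg (show ¬ m - 1 ≤ j by omega), if_pos h2,
          if_pos (show m - 1 ≤ j + 1 by omega)]
      · by_cases h1 : m - 1 ≤ j
        · simp only [if_neg h2, if_pos h1, if_pos (show m - 1 ≤ j + 1 by omega)]
        · simp only [if_neg h2, if_neg h1, if_neg (show ¬ m - 1 ≤ j + 1 by omega)]

end Stmt7Aux

namespace Stmt7Aux

variable {m n : ℕ} [NeZero m] [NeZero n] (hm : 3 ≤ m) (hn : 3 ≤ n)

open Fin.NatCast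

set_option linter.unusedSectionVars false

lemma prefix_split {α : Type*} {u x y : List α} (h : u <+: x ++ y) :
    u <+: x ∨ ∃ v, v <+: y ∧ u = x ++ v := by
  rcases List.prefix_or_prefix_of_prefix h (List.prefix_append x y) with h1 | h1
  · exact Or.inl h1
  · obtain ⟨t, rfl⟩ := h1
    exact Or.inr ⟨t, (List.prefix_append_right_inj x).mp h, rfl⟩

lemma aux : ∀ (M : ℕ), M < n → ∀ S : Finset ℕ, S.Nonempty → (∀ s ∈ S, s ≤ M) →
    ∃ w : List Bool,
      (concatNFA m n hm hn).evalFrom (C (0 : Fin m) {(0 : Fin n)}) w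
        = C (0 : Fin m) {v : Fin n | v.val ∈ S} ∧
      ∀ u, u <+: w → ∃ (k : Fin m) (T : Set (Fin n)),
        (concatNFA m n hm hn).evalFrom (C (0 : Fin m) {(0 : Fin n)}) u = C k T ∧
          ∀ t ∈ T, t.val ≤ M := by
  intro M
  induction M using Nat.strong_induction_on with
  | _ M ih =>
  intro hMn S hS hSM
  by_cases h0 : (0 : ℕ) ∈ S
  · by_cases hS0 : S = {0}
    · subst hS0
      have hset : {v : Fin n | v.val ∈ ({0} : Finset ℕ)} = {(0 : Fin n)} := by
        ext v
        simp only [Set.mem_setOf_eq, Finset.mem_singleton, Set.mem_singleton_iff,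
          Fin.ext_iff, Fin.val_zero]
      refine ⟨[], by rw [NFA.evalFrom_nil, hset], ?_⟩
      intro u hu
      rw [List.prefix_nil.mp hu]
      exact ⟨0, {0}, by simp [NFA.evalFrom], fun t ht => by
        simp only [Set.mem_singleton_iff] at ht; simp [ht]⟩
    · -- 0 ∈ S, S ≠ {0}
      have hex : ∃ x ∈ S, x ≠ 0 := by
        by_contra h; push_neg at h
        apply hS0
        ext y
        simp only [Finset.mem_singleton]
        exact ⟨fun hy => h y hy, fun hy => hy ▸ h0⟩
      obtain ⟨x, hxS, hx0⟩ := hex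
      have hM1 : 1 ≤ M := by have := hSM x hxS; omega
      set S' := S.erase 0 with hS'def
      have hS'ne : S'.Nonempty := ⟨x, Finset.mem_erase.mpr ⟨hx0, hxS⟩⟩
      set T0 := S'.image (· - 1) with hT0def
      have hb0 : ∀ s ∈ T0, s ≤ M - 1 := by
        intro s hs
        simp only [hT0def, Finset.mem_image] at hs
        obtain ⟨t, ht, rfl⟩ := hs
        have := hSM t (Finset.mem_of_mem_erase ht)
        omega
      obtain ⟨w₁, hw₁, hp₁⟩ := ih (M - 1) (by omega) (by omega) T0 (hS'ne.image _) hb0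
      have hS'facts : ∀ t ∈ S', 1 ≤ t ∧ t ≤ M := fun t ht =>
        ⟨by have := (Finset.mem_erase.mp ht).1; omega,
         hSM t (Finset.mem_of_mem_erase ht)⟩
      have hstep1 : (concatNFA m n hm hn).stepSet (C (0 : Fin m) {v : Fin n | v.val ∈ T0}) true
          = C (0 : Fin m) {v : Fin n | v.val ∈ S'} := by
        have himg1 : (fun a : Fin n => a + 1) '' {v : Fin n | v.val ∈ T0}
            = {v : Fin n | v.val ∈ S'} := by
          ext v
          simp only [Set.mem_image, Set.mem_setOf_eq]
          constructor
          · rintro ⟨a, ha, rfl⟩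
            simp only [hT0def, Finset.mem_image] at ha
            obtain ⟨t, ht, hta⟩ := ha
            obtain ⟨ht1, htM⟩ := hS'facts t ht
            have hval : (a + 1).val = a.val + 1 := val_add_one a (by omega)
            rw [hval]
            have : a.val + 1 = t := by omega
            rwa [this]
          · intro hv
            obtain ⟨hv1, hvM⟩ := hS'facts _ hv
            refine ⟨⟨v.val - 1, by omega⟩, ?_, ?_⟩
            · simp only [hT0def, Finset.mem_image]
              exact ⟨v.val, hv, rfl⟩
            · apply Fin.ext
              rw [val_add_one _ (by simp; omega)]
              simp; omega
        rw [step_true hm hn, if_neg (show (0 : Fin m).val ≠ m - 1 by rw [Fin.val_zero]; omega),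
          Set.union_empty, himg1]
      have hins : insert (0 : Fin n) {v : Fin n | v.val ∈ S'} = {v : Fin n | v.val ∈ S} := by
        ext v
        simp only [Set.mem_insert_iff, Set.mem_setOf_eq, hS'def, Finset.mem_erase]
        constructor
        · rintro (rfl | ⟨-, hv⟩)
          · simpa using h0
          · exact hv
        · intro hv
          by_cases hz : v.val = 0
          · exact Or.inl (Fin.ext (by simp [hz]))
          · exact Or.inr ⟨hz, hv⟩
      have hstep2 : (concatNFA m n hm hn).evalFrom
            (C (0 : Fin m) {v : Fin n | v.val ∈ S'}) (List.replicate m false)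
          = C (0 : Fin m) {v : Fin n | v.val ∈ S} := by
        rw [eval_falses hm hn m le_rfl, if_pos (by omega), hins, Fin.natCast_self]
      refine ⟨w₁ ++ (true :: List.replicate m false), ?_, ?_⟩
      · rw [evalFrom_app, hw₁,
          show (true :: List.replicate m false) = [true] ++ List.replicate m false from rfl,
          evalFrom_app, NFA.evalFrom_singleton, hstep1, hstep2]
      · intro u hu
        rcases prefix_split hu with h | ⟨v, hv, rfl⟩
        · obtain ⟨k, T, he, hb⟩ := hp₁ u h
          exact ⟨k, T, he, fun t ht => le_trans (hb t ht) (by omega)⟩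
        · rw [evalFrom_app, hw₁]
          rcases v with _ | ⟨b, v'⟩
          · refine ⟨0, {v : Fin n | v.val ∈ T0}, by simp [NFA.evalFrom], ?_⟩
            intro t ht
            exact le_trans (hb0 t.val ht) (by omega)
          · rw [List.cons_prefix_cons] at hv
            obtain ⟨rfl, hv'⟩ := hv
            obtain ⟨hlen, hrep⟩ := List.prefix_replicate_iff.mp hv'
            rw [hrep,
              show (true :: List.replicate v'.length false)
                = [true] ++ List.replicate v'.length false from rfl,
              evalFrom_app, NFA.evalFrom_singleton, hstep1,
              eval_falses hm hn v'.length hlen]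
            refine ⟨_, _, rfl, ?_⟩
            intro t ht
            split_ifs at ht with hc
            · rcases Set.mem_insert_iff.mp ht with rfl | ht
              · simp
              · exact (hS'facts t.val ht).2
            · exact (hS'facts t.val ht).2
  · -- 0 ∉ S
    have hs₁S := S.min'_mem hS
    set s₁ := S.min' hS with hs₁def
    have hs₁pos : 1 ≤ s₁ := by
      rcases Nat.eq_zero_or_pos s₁ with h | h
      · exact absurd (h ▸ hs₁S) h0
      · exact h
    have hs₁M : s₁ ≤ M := hSM _ hs₁S
    set S₀ := S.image (· - s₁) with hS₀def
    have h0S₀ : (0 : ℕ) ∈ S₀ := by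
      simp only [hS₀def, Finset.mem_image]
      exact ⟨s₁, hs₁S, by omega⟩
    have hb0 : ∀ s ∈ S₀, s ≤ M - s₁ := by
      intro s hs
      simp only [hS₀def, Finset.mem_image] at hs
      obtain ⟨t, ht, rfl⟩ := hs
      have := hSM t ht
      omega
    obtain ⟨w₀, hw₀, hp₀⟩ := ih (M - s₁) (by omega) (by omega) S₀ ⟨0, h0S₀⟩ hb0
    have himg : (fun a : Fin n => a + (s₁ : Fin n)) '' {v : Fin n | v.val ∈ S₀}
        = {v : Fin n | v.val ∈ S} := by
      ext v
      simp only [Set.mem_image, Set.mem_setOf_eq]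
      constructor
      · rintro ⟨a, ha, rfl⟩
        simp only [hS₀def, Finset.mem_image] at ha
        obtain ⟨t, ht, hta⟩ := ha
        have htm := hSM t ht
        have hts : s₁ ≤ t := S.min'_le t ht
        rw [val_add_cast a s₁ (by omega), show a.val + s₁ = t by omega]
        exact ht
      · intro hv
        have hvM := hSM _ hv
        have hvs : s₁ ≤ v.val := S.min'_le _ hv
        refine ⟨⟨v.val - s₁, by omega⟩, ?_, ?_⟩
        · simp only [hS₀def, Finset.mem_image]
          exact ⟨v.val, hv, rfl⟩
        · apply Fin.ext
          rw [val_add_cast _ s₁ (by simp; omega)]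
          simp; omega
    refine ⟨w₀ ++ List.replicate s₁ true, ?_, ?_⟩
    · rw [evalFrom_app, hw₀, eval_trues hm hn, himg]
    · intro u hu
      rcases prefix_split hu with h | ⟨v, hv, rfl⟩
      · obtain ⟨k, T, he, hb⟩ := hp₀ u h
        exact ⟨k, T, he, fun t ht => le_trans (hb t ht) (by omega)⟩
      · obtain ⟨hlen, hrep⟩ := List.prefix_replicate_iff.mp hv
        rw [hrep, evalFrom_app, hw₀, eval_trues hm hn]
        refine ⟨_, _, rfl, ?_⟩
        rintro t ⟨a, ha, rfl⟩
        have haM := hb0 a.val ha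
        rw [val_add_cast a v.length (by omega)]
        omega

end Stmt7Aux

namespace Stmt7Aux

variable {m n : ℕ} [NeZero m] [NeZero n]

set_option linter.unusedSectionVars false

lemma inr_mem_C (k : Fin m) (T : Set (Fin n)) (x : Fin n) :
    Sum.inr x ∈ C k T ↔ x ∈ T := by simp [C]

lemma start_eq (h1 : 0 < m) (h2 : 0 < n) :
    ({Sum.inl ⟨0, h1⟩, Sum.inr ⟨0, h2⟩} : Set (Fin m ⊕ Fin n))
      = C (0 : Fin m) {(0 : Fin n)} := by
  have hm0 : (0 : Fin m) = ⟨0, h1⟩ := Fin.ext (by simp)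
  have hn0 : (0 : Fin n) = ⟨0, h2⟩ := Fin.ext (by simp)
  rw [C, hm0, hn0, Set.image_singleton, Set.singleton_union]

lemma C_eq (h1 : 0 < m) (T : Set (Fin n)) :
    C (0 : Fin m) T = {Sum.inl ⟨0, h1⟩} ∪ Sum.inr '' T := by
  have hm0 : (0 : Fin m) = ⟨0, h1⟩ := Fin.ext (by simp)
  rw [C, hm0]

end Stmt7Aux


/-- For every nonempty `S ⊆ Fin n` there is a word `w` with
`N.evalFrom {inl 0, inr 0} w = {inl 0} ∪ inr '' S`, and if `n−1 ∉ S` then no prefix of `w`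
ever reaches the state `inr (n−1)`. -/
theorem stmt7 (m n : ℕ) (hm : 3 ≤ m) (hn : 3 ≤ n)
    (S : Set (Fin n)) (hS : S.Nonempty) :
    ∃ w : List Bool,
      (concatNFA m n hm hn).evalFrom
          {Sum.inl ⟨0, by omega⟩, Sum.inr ⟨0, by omega⟩} w
        = {Sum.inl ⟨0, by omega⟩} ∪ Sum.inr '' S ∧
      ((⟨n - 1, by omega⟩ : Fin n) ∉ S →
        ∀ u : List Bool, u <+: w →
          Sum.inr (⟨n - 1, by omega⟩ : Fin n) ∉
            (concatNFA m n hm hn).evalFrom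
              {Sum.inl ⟨0, by omega⟩, Sum.inr ⟨0, by omega⟩} u) := by
  haveI : NeZero m := ⟨by omega⟩
  haveI : NeZero n := ⟨by omega⟩
  classical
  set Sn : Finset ℕ := (S.toFinite.toFinset).image Fin.val with hSndef
  have hSn_ne : Sn.Nonempty := by
    obtain ⟨v, hv⟩ := hS
    exact ⟨v.val, by simp [hSndef]; exact ⟨v, hv, rfl⟩⟩
  set M := Sn.max' hSn_ne with hMdef
  have hMmem : ∃ v ∈ S, v.val = M := by
    have := Sn.max'_mem hSn_ne
    simp only [hSndef, Finset.mem_image, Set.Finite.mem_toFinset] at this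
    exact this
  have hMn : M < n := by
    obtain ⟨v, -, hv⟩ := hMmem
    omega
  obtain ⟨w, h1, h2⟩ := Stmt7Aux.aux hm hn M hMn Sn hSn_ne (fun s hs => Sn.le_max' s hs)
  have hsets : {v : Fin n | v.val ∈ Sn} = S := by
    ext v
    simp only [Set.mem_setOf_eq, hSndef, Finset.mem_image, Set.Finite.mem_toFinset]
    constructor
    · rintro ⟨u, hu, huv⟩
      rwa [show u = v from Fin.ext huv] at hu
    · intro hv
      exact ⟨v, hv, rfl⟩
  rw [Stmt7Aux.start_eq (by omega) (by omega)]
  refine ⟨w, ?_, ?_⟩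
  · rw [h1, hsets, Stmt7Aux.C_eq (by omega : 0 < m)]
  · intro hn1 u hu
    obtain ⟨k, T, he, hb⟩ := h2 u hu
    rw [he, Stmt7Aux.inr_mem_C]
    intro hmem
    have := hb _ hmem
    simp only at this
    -- (⟨n-1,_⟩ : Fin n).val = n - 1 ≤ M
    have hM1 : M ≠ n - 1 := by
      intro h
      obtain ⟨v, hvS, hv⟩ := hMmem
      exact hn1 (by rwa [show (⟨n - 1, by omega⟩ : Fin n) = v from Fin.ext (by show n - 1 = v.val; omega)])
    omega
end

section
/- For every k ≥ 2 and all integers n₁ ≥ 3, n₂ ≥ 4, and n_i ≥ 3 for 3 ≤ i ≤ k, there exist languages L₁,…,L_k over a three-letter alphabet such that each L_i is accepted by a DFA with n_i states, while every DFA accepting the concatenation L₁L₂⋯L_k has at least n₁ · 2^{(n₂+n₃+⋯+n_k) − (2k−2)} states. -/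
namespace Stmt15

abbrev Λ := Fin 3
def la : Λ := 0
def lb : Λ := 1
def lc : Λ := 2

lemma lam_cases (x : Λ) : x = la ∨ x = lb ∨ x = lc := by revert x; decide

lemma la_ne_lb : la ≠ lb := by decide
lemma lb_ne_lc : lb ≠ lc := by decide
lemma la_ne_lc : la ≠ lc := by decide

/-- counter DFA for `L₀` -/
def D0 (m : ℕ) : DFA Λ (ZMod m) where
  step := fun s σ => if σ = lc then s + 1 else s
  start := 0
  accept := { s | s ≠ ((m - 1 : ℕ) : ZMod m) }

lemma D0_evalFrom (m : ℕ) (s : ZMod m) (w : List Λ) :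
    (D0 m).evalFrom s w = s + (w.count lc : ZMod m) := by
  induction w generalizing s with
  | nil => simp [DFA.evalFrom]
  | cons x t ih =>
      rw [show (x :: t) = [x] ++ t by simp, DFA.evalFrom, List.foldl_append]
      rw [← DFA.evalFrom, ← DFA.evalFrom, ih]
      by_cases hx : x = lc
      · subst hx
        simp [DFA.evalFrom, D0, List.count_cons]
        ring
      · simp [DFA.evalFrom, D0, List.foldl, hx, List.count_cons, Ne.symm hx]

lemma D0_mem_accepts (m : ℕ) (w : List Λ) :
    w ∈ (D0 m).accepts ↔ ((w.count lc : ℕ) : ZMod m) ≠ ((m - 1 : ℕ) : ZMod m) := by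
  rw [DFA.mem_accepts]
  show (D0 m).evalFrom (D0 m).start w ∈ (D0 m).accept ↔ _
  rw [D0_evalFrom]
  show (0 + _ ≠ _) ↔ _
  rw [zero_add]

/-- fixed-length DFA -/
def DW (p : ℕ) : DFA Λ (Fin (p + 2)) where
  step := fun j _ => ⟨min (j.val + 1) (p + 1), by omega⟩
  start := ⟨0, by omega⟩
  accept := { j | j.val = p }

lemma DW_evalFrom (p : ℕ) (j : Fin (p+2)) (w : List Λ) :
    (DW p).evalFrom j w = ⟨min (j.val + w.length) (p + 1), by omega⟩ := by
  induction w generalizing j with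
  | nil =>
      apply Fin.ext
      show j.val = min (j.val + 0) (p+1)
      omega
  | cons x t ih =>
      show (DW p).evalFrom ((DW p).step j x) t = _
      rw [ih]
      apply Fin.ext
      show min (min (j.val + 1) (p+1) + t.length) (p+1) = min (j.val + (t.length + 1)) (p+1)
      omega

lemma DW_mem_accepts (p : ℕ) (w : List Λ) :
    w ∈ (DW p).accepts ↔ w.length = p := by
  rw [DFA.mem_accepts]
  show (DW p).evalFrom (DW p).start w ∈ (DW p).accept ↔ _
  rw [DW_evalFrom]
  show min (0 + w.length) (p+1) = p ↔ _
  omega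


/-- the restartable cycle DFA for `L₁` -/
def D1 (q : ℕ) : DFA Λ (Option (ZMod q)) where
  step := fun s σ =>
    if σ = lc then none else
    match s with
    | none => if σ = lb then some 1 else none
    | some t => if σ = la ∧ t = 0 then none else some (t + 1)
  start := none
  accept := {some 0}

variable {q : ℕ}

lemma D1_step_c (s : Option (ZMod q)) : (D1 q).step s lc = none := by
  cases s <;> simp [D1]

lemma D1_step_none_a : (D1 q).step none la = none := by simp [D1, la, lb, lc]

lemma D1_step_none_b : (D1 q).step none lb = some 1 := by simp [D1, la, lb, lc]

lemma D1_step_some_b (t : ZMod q) : (D1 q).step (some t) lb = some (t + 1) := by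
  simp [D1, la, lb, lc]

lemma D1_step_some_a (t : ZMod q) (ht : t ≠ 0) : (D1 q).step (some t) la = some (t + 1) := by
  simp [D1, la, lb, lc, ht]

lemma D1_step_some_a0 : (D1 q).step (some (0 : ZMod q)) la = none := by
  simp [D1, la, lb, lc]

lemma D1_run_ab (hq : 2 ≤ q) :
    ∀ (w : List Λ) (s : ZMod q), (∀ x ∈ w, x ≠ lc) → s.val ≠ 0 → s.val + w.length ≤ q →
    (D1 q).evalFrom (some s) w = some (s + (w.length : ZMod q))
  | [], s, _, _, _ => by simp [DFA.evalFrom]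
  | x :: t, s, hw, hs, hlen => by
      haveI : NeZero q := ⟨by omega⟩
      have hx : x ≠ lc := hw x (by simp)
      have hs' : s ≠ 0 := fun h => hs (by simp [h])
      have hstep : (D1 q).step (some s) x = some (s + 1) := by
        rcases lam_cases x with h|h|h
        · rw [h]; exact D1_step_some_a s hs'
        · rw [h]; exact D1_step_some_b s
        · exact absurd h hx
      show (D1 q).evalFrom ((D1 q).step (some s) x) t = _
      rw [hstep]
      rcases Nat.lt_or_ge (s.val + 1) q with hlt | hge
      · have hv : (s + 1).val = s.val + 1 := by
          have : s + 1 = ((s.val + 1 : ℕ) : ZMod q) := by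
            push_cast [ZMod.natCast_zmod_val]; ring
          rw [this, ZMod.val_cast_of_lt hlt]
        have := D1_run_ab hq t (s + 1) (fun y hy => hw y (by simp [hy])) (by omega)
          (by rw [hv]; simp at hlen ⊢; omega)
        rw [this]
        congr 1
        simp only [List.length_cons]
        push_cast
        ring
      · have hteq : t.length = 0 := by simp at hlen; omega
        rw [List.length_eq_zero_iff] at hteq
        subst hteq
        show some (s + 1) = _
        simp

lemma D1_run_none : ∀ (w : List Λ), (∀ x ∈ w, x ≠ lb) →
    (D1 q).evalFrom none w = none
  | [], _ => rfl
  | x :: t, hw => by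
      have hx : x ≠ lb := hw x (by simp)
      have hstep : (D1 q).step none x = none := by
        rcases lam_cases x with h|h|h
        · rw [h]; exact D1_step_none_a
        · exact absurd h hx
        · rw [h]; exact D1_step_c none
      show (D1 q).evalFrom ((D1 q).step none x) t = _
      rw [hstep]
      exact D1_run_none t (fun y hy => hw y (by simp [hy]))

/-- the key "attempt accepted" positive computation -/
lemma D1_run_attempt (hq : 2 ≤ q) (w : List Λ) (hw : ∀ x ∈ w, x ≠ lc)
    (hlen : w.length = q - 1) :
    (D1 q).evalFrom none (lb :: w) = some 0 := by
  haveI : NeZero q := ⟨by omega⟩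
  haveI : Fact (1 < q) := ⟨by omega⟩
  show (D1 q).evalFrom ((D1 q).step none lb) w = _
  rw [D1_step_none_b]
  rw [D1_run_ab hq w 1 hw (by rw [ZMod.val_one]; omega) (by rw [ZMod.val_one]; omega)]
  congr 1
  rw [hlen]
  have : ((1 : ZMod q) + ((q - 1 : ℕ) : ZMod q)) = (((1 + (q - 1) : ℕ)) : ZMod q) := by
    push_cast; ring
  rw [this, show 1 + (q - 1) = q by omega, ZMod.natCast_self]

/-- killing run : `b b a^(q-1)` from start dies -/
lemma D1_run_bba (hq : 2 ≤ q) :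
    (D1 q).evalFrom none (lb :: lb :: List.replicate (q - 1) la) = none := by
  haveI : NeZero q := ⟨by omega⟩
  show (D1 q).evalFrom ((D1 q).step none lb) (lb :: List.replicate (q-1) la) = _
  rw [D1_step_none_b]
  show (D1 q).evalFrom ((D1 q).step (some 1) lb) (List.replicate (q-1) la) = _
  rw [D1_step_some_b]
  rcases Nat.lt_or_ge q 3 with h3 | h3
  · -- q = 2
    have hq2 : q = 2 := by omega
    subst hq2
    show (D1 2).evalFrom (some (1+1)) [la] = none
    show (D1 2).evalFrom ((D1 2).step (some (1+1)) la) [] = none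
    rw [show ((1 : ZMod 2) + 1) = 0 by decide, D1_step_some_a0]
    rfl
  · -- q ≥ 3 : run a^(q-3+... ) : split replicate (q-1) = replicate (q-2) ++ [la]
    have hsplit : List.replicate (q-1) la = List.replicate (q-2) la ++ [la] := by
      rw [← List.replicate_succ']
      congr 1
      omega
    rw [hsplit, DFA.evalFrom_append_singleton]
    have hval : ((1 : ZMod q) + 1).val = 2 := by
      have : (1 : ZMod q) + 1 = ((2 : ℕ) : ZMod q) := by push_cast; ring
      rw [this, ZMod.val_cast_of_lt (by omega)]
    rw [D1_run_ab hq _ _ (by intro x hx; rw [List.eq_of_mem_replicate hx]; decide)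
      (by rw [hval]; omega) (by rw [hval, List.length_replicate]; omega)]
    rw [List.length_replicate]
    have : (1 : ZMod q) + 1 + ((q - 2 : ℕ) : ZMod q) = 0 := by
      have : ((1:ZMod q) + 1 + ((q - 2 : ℕ) : ZMod q)) = ((2 + (q - 2) : ℕ) : ZMod q) := by
        push_cast; ring
      rw [this, show 2 + (q - 2) = q by omega, ZMod.natCast_self]
    rw [this, D1_step_some_a0]

/-- The necessary condition for acceptance-from-start ("NEC"). -/
lemma D1_nec (hq : 2 ≤ q) (v : List Λ) (s : ZMod q)
    (h : (D1 q).evalFrom none v = some s) :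
    ∃ j, j < v.length ∧ v[j]? = some lb ∧ ((v.length - j : ℕ) : ZMod q) = s ∧
      ∀ l, 1 ≤ l → j + l * q < v.length → v[j + l * q]? = some lb := by
  haveI : NeZero q := ⟨by omega⟩
  induction v using List.reverseRecOn generalizing s with
  | nil => exact absurd h (by simp [DFA.evalFrom])
  | append_singleton w x ih =>
      rw [DFA.evalFrom_append_singleton] at h
      rcases hew : (D1 q).evalFrom none w with _ | s'
      · -- fresh restart : x = lb, s = 1
        rw [hew] at h
        have hx : x = lb := by
          rcases lam_cases x with h'|h'|h'
          · rw [h', D1_step_none_a] at h; exact absurd h (by simp)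
          · exact h'
          · rw [h', D1_step_c] at h; exact absurd h (by simp)
        rw [hx, D1_step_none_b] at h
        have hs : s = 1 := by injection h with h'; exact h'.symm
        refine ⟨w.length, by simp, ?_, ?_, ?_⟩
        · rw [hx]; exact (List.getElem?_concat_length : (w ++ [lb])[w.length]? = some lb)
        · rw [hs]; simp
        · intro l hl hbound
          simp at hbound
          rcases hbound with h' | h' <;> omega
      · rw [hew] at h
        obtain ⟨j, hj, hjb, hjs, hcross⟩ := ih s' hew
        have hgb : ∀ i, i < w.length → (w ++ [x])[i]? = w[i]? := by
          intro i hi; exact List.getElem?_append_left hi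
        have key : (s = s' + 1 ∧ (x = lb ∨ (x = la ∧ s' ≠ 0))) := by
          rcases lam_cases x with h'|h'|h'
          · subst h'
            by_cases h0 : s' = 0
            · rw [h0, D1_step_some_a0] at h; exact absurd h (by simp)
            · rw [D1_step_some_a s' h0] at h
              injection h with h''
              exact ⟨h''.symm, Or.inr ⟨rfl, h0⟩⟩
          · subst h'
            rw [D1_step_some_b] at h
            injection h with h''
            exact ⟨h''.symm, Or.inl rfl⟩
          · subst h'
            rw [D1_step_c] at h; exact absurd h (by simp)
        obtain ⟨hs, hxx⟩ := key
        refine ⟨j, by simp; omega, by rw [hgb j hj]; exact hjb, ?_, ?_⟩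
        · rw [hs, ← hjs]
          rw [List.length_append, List.length_singleton]
          rw [show w.length + 1 - j = (w.length - j) + 1 by omega]
          push_cast
          ring
        · intro l hl hbound
          rw [List.length_append, List.length_singleton] at hbound
          rcases Nat.lt_or_ge (j + l * q) w.length with hlt | hge
          · rw [hgb _ hlt]; exact hcross l hl hlt
          · have heq : j + l * q = w.length := by omega
            rcases hxx with hb | ⟨ha, hs0⟩
            · rw [heq, hb]
              exact (List.getElem?_concat_length : (w ++ [lb])[w.length]? = some lb)
            · exfalso
              apply hs0
              rw [← hjs, ← heq, show j + l * q - j = l * q by omega]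
              push_cast
              simp [ZMod.natCast_self]
  
lemma take_cons_of_pos {α : Type*} (n : ℕ) (hn : 0 < n) (a : α) (l : List α) :
    (a :: l).take n = a :: l.take (n - 1) := by
  cases n with
  | zero => omega
  | succ k => simp [List.take_succ_cons]

lemma evalFrom_append {α σ : Type*} (M : DFA α σ) (s : σ) (x y : List α) :
    M.evalFrom s (x ++ y) = M.evalFrom (M.evalFrom s x) y := by
  simp [DFA.evalFrom, List.foldl_append]

lemma D1_mem_accepts (q : ℕ) (v : List Λ) :
    v ∈ (D1 q).accepts ↔ (D1 q).evalFrom none v = some 0 := by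
  rw [DFA.mem_accepts]
  exact Set.mem_singleton_iff

def lenLang (T : ℕ) : Language Λ := {w | w.length = T}

lemma mem_lenLang (T : ℕ) (w : List Λ) : w ∈ lenLang T ↔ w.length = T := Iff.rfl

lemma lenLang_mul (p s : ℕ) : lenLang p * lenLang s = lenLang (p + s) := by
  ext w
  rw [Language.mem_mul]
  constructor
  · rintro ⟨a, ha, b, hb, rfl⟩
    rw [mem_lenLang] at ha hb ⊢
    simp [ha, hb]
  · intro hw
    rw [mem_lenLang] at hw
    refine ⟨w.take p, ?_, w.drop p, ?_, List.take_append_drop p w⟩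
    · rw [mem_lenLang, List.length_take]; omega
    · rw [mem_lenLang, List.length_drop]; omega

lemma ofFn_lenLang_prod : ∀ (k' : ℕ) (g : Fin k' → ℕ),
    (List.ofFn (fun i => lenLang (g i))).prod = lenLang (∑ i, g i)
  | 0, g => by
      ext w
      simp [List.ofFn_zero, Language.mem_one, mem_lenLang, List.length_eq_zero_iff]
  | (k' + 1), g => by
      rw [List.ofFn_succ, List.prod_cons, ofFn_lenLang_prod k' (fun i => g i.succ),
        lenLang_mul, Fin.sum_univ_succ]

lemma memP_iff (m q T : ℕ) (X : List Λ) :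
    X ∈ (D0 m).accepts * ((D1 q).accepts * lenLang T) ↔
    ∃ u₁ v ω : List Λ, ((u₁.count lc : ℕ) : ZMod m) ≠ ((m - 1 : ℕ) : ZMod m) ∧
      (D1 q).evalFrom none v = some 0 ∧ ω.length = T ∧ u₁ ++ (v ++ ω) = X := by
  rw [Language.mem_mul]
  constructor
  · rintro ⟨u₁, hu, vw, hvw, rfl⟩
    rw [Language.mem_mul] at hvw
    obtain ⟨v, hv, ω, hω, rfl⟩ := hvw
    exact ⟨u₁, v, ω, (D0_mem_accepts m u₁).mp hu, (D1_mem_accepts q v).mp hv, hω, rfl⟩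
  · rintro ⟨u₁, v, ω, h1, h2, h3, rfl⟩
    exact ⟨u₁, (D0_mem_accepts m u₁).mpr h1, v ++ ω,
      Language.mem_mul.mpr ⟨v, (D1_mem_accepts q v).mpr h2, ω, h3, rfl⟩, rfl⟩

/-! ### witnesses -/

def emb : Fin 2 → Λ := fun e => if e = 1 then lb else la

lemma emb_ne_lc (e : Fin 2) : emb e ≠ lc := by revert e; decide

lemma emb_eq_lb {e : Fin 2} : emb e = lb ↔ e = 1 := by revert e; decide

def wordU {S : ℕ} (u : Fin S → Fin 2) : List Λ := (List.ofFn u).map emb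

lemma wordU_length {S : ℕ} (u : Fin S → Fin 2) : (wordU u).length = S := by
  simp [wordU]

lemma lc_not_mem_wordU {S : ℕ} (u : Fin S → Fin 2) : lc ∉ wordU u := by
  intro h
  rw [wordU, List.mem_map] at h
  obtain ⟨e, -, he⟩ := h
  exact emb_ne_lc e he

lemma count_lc_wordU {S : ℕ} (u : Fin S → Fin 2) : (wordU u).count lc = 0 :=
  List.count_eq_zero.mpr (lc_not_mem_wordU u)

lemma wordU_getElem {S : ℕ} (u : Fin S → Fin 2) (i : ℕ) (hi : i < S) :
    (wordU u)[i]'(by rw [wordU_length]; exact hi) = emb (u ⟨i, hi⟩) := by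
  simp [wordU, List.getElem_map]

lemma wordU_getElem? {S : ℕ} (u : Fin S → Fin 2) (i : ℕ) (hi : i < S) :
    (wordU u)[i]? = some (emb (u ⟨i, hi⟩)) := by
  rw [List.getElem?_eq_getElem (by rw [wordU_length]; exact hi)]
  rw [wordU_getElem u i hi]

lemma castne (m : ℕ) [NeZero m] {x y : ℕ} (hx : x < m) (hy : y < m) (hxy : x ≠ y) :
    ((x : ℕ) : ZMod m) ≠ ((y : ℕ) : ZMod m) := by
  intro h
  apply hxy
  have := congrArg ZMod.val h
  rwa [ZMod.val_cast_of_lt hx, ZMod.val_cast_of_lt hy] at this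

section Tests

variable {m q T : ℕ}

/-- The window-bit test. -/
lemma test_F (hm : 3 ≤ m) (hq : 2 ≤ q) (r : ℕ) (hr : r < m - 1)
    (u : Fin (q + T) → Fin 2) (p : ℕ) (hp : p < q + T) :
    (List.replicate r lc ++ (wordU u ++ List.replicate p la)) ∈
      (D0 m).accepts * ((D1 q).accepts * lenLang T) ↔ u ⟨p, hp⟩ = 1 := by
  haveI : NeZero m := ⟨by omega⟩
  haveI : NeZero q := ⟨by omega⟩
  have hWlen : (wordU u).length = q + T := wordU_length u
  have hXlen : (List.replicate r lc ++ (wordU u ++ List.replicate p la)).length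
      = r + (q + T) + p := by
    simp [List.length_append, hWlen]
    omega
  -- letter extraction from `X[J]? = some lb`
  have hextract : ∀ J, J < r + (q + T) + p →
      (List.replicate r lc ++ (wordU u ++ List.replicate p la))[J]? = some lb →
      ∃ hJ : r ≤ J ∧ J < r + (q + T), u ⟨J - r, by omega⟩ = 1 := by
    intro J hJlt hJb
    rcases Nat.lt_or_ge J r with h1 | h1
    · exfalso
      rw [List.getElem?_append_left (by simpa using h1), List.getElem?_replicate_of_lt h1]
        at hJb
      exact lb_ne_lc (Option.some.inj hJb).symm
    rcases Nat.lt_or_ge J (r + (q + T)) with h2 | h2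
    · refine ⟨⟨h1, h2⟩, ?_⟩
      rw [List.getElem?_append_right (by simpa using h1), List.length_replicate] at hJb
      rw [List.getElem?_append_left (by rw [hWlen]; omega)] at hJb
      rw [wordU_getElem? u (J - r) (by omega)] at hJb
      exact emb_eq_lb.mp (Option.some.inj hJb)
    · exfalso
      rw [List.getElem?_append_right (by simp; omega), List.length_replicate] at hJb
      rw [List.getElem?_append_right (by rw [hWlen]; omega), hWlen] at hJb
      rw [List.getElem?_replicate] at hJb
      by_cases h3 : J - r - (q + T) < p
      · rw [if_pos h3] at hJb
        exact la_ne_lb (Option.some.inj hJb)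
      · rw [if_neg h3] at hJb
        exact absurd hJb (by simp)
  constructor
  · -- forward
    intro hmem
    rw [memP_iff] at hmem
    obtain ⟨u₁, v, ω, hgate, heval, hωT, hdecomp⟩ := hmem
    have hlens : u₁.length + v.length + ω.length = r + (q + T) + p := by
      rw [← hXlen, ← hdecomp]
      simp [List.length_append]
      omega
    obtain ⟨j, hj, hjb, hjs, hcross⟩ := D1_nec hq v 0 heval
    -- globalization tool
    have hglob : ∀ i, i < v.length →
        (List.replicate r lc ++ (wordU u ++ List.replicate p la))[u₁.length + i]? = v[i]? := by
      intro i hi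
      rw [← hdecomp, List.getElem?_append_right (Nat.le_add_right _ _),
        Nat.add_sub_cancel_left, List.getElem?_append_left hi]
    have hJlt : u₁.length + j < r + (q + T) + p := by
      have : j < v.length := hj
      omega
    obtain ⟨⟨hJr, hJrS⟩, hu⟩ := hextract (u₁.length + j) hJlt (by rw [hglob j hj]; exact hjb)
    have hdvd : q ∣ (v.length - j) := by
      rw [ZMod.natCast_eq_zero_iff] at hjs
      exact hjs
    obtain ⟨l, hl⟩ := hdvd
    have hlpos : 1 ≤ l := by
      rcases Nat.eq_zero_or_pos l with h0 | h0
      · exfalso; rw [h0, Nat.mul_zero] at hl; omega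
      · exact h0
    have hsum : (u₁.length + j) + (v.length - j) = r + q + p := by
      have h1 : (u₁.length + j) + (v.length - j) = u₁.length + v.length := by omega
      omega
    rcases Nat.eq_or_lt_of_le hlpos with h1 | h1
    · -- l = 1 : J = r + p
      have hJrp : u₁.length + j = r + p := by
        rw [hl, ← h1] at hsum
        omega
      have heq : u₁.length + j - r = p := by omega
      rw [show (⟨u₁.length + j - r, by omega⟩ : Fin (q + T)) = ⟨p, hp⟩ by
        apply Fin.ext; simpa using heq] at hu
      exact hu
    · -- l ≥ 2 : crossing at r + p
      obtain ⟨l', rfl⟩ : ∃ l', l = l' + 1 := ⟨l - 1, by omega⟩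
      have hl'pos : 1 ≤ l' := by omega
      obtain ⟨e, hee, hesum⟩ : ∃ e, e = l' * q ∧ q * (l' + 1) = e + q :=
        ⟨l' * q, rfl, by ring⟩
      rw [hesum] at hl
      have hbound : j + e < v.length := by omega
      have hcb := hcross l' hl'pos (by rw [← hee]; exact hbound)
      rw [← hee] at hcb
      have hcglob : (List.replicate r lc ++
          (wordU u ++ List.replicate p la))[u₁.length + (j + e)]? = some lb := by
        rw [hglob _ hbound]
        exact hcb
      have hJc : u₁.length + (j + e) = r + p := by omega
      obtain ⟨⟨h1', h2'⟩, hu'⟩ := hextract (u₁.length + (j + e)) (by omega) hcglob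
      rw [show (⟨u₁.length + (j + e) - r, by omega⟩ : Fin (q + T)) = ⟨p, hp⟩ by
        apply Fin.ext; simp; omega] at hu'
      exact hu'
  · -- backward
    intro hup
    rw [memP_iff]
    have hYlen : ((wordU u).drop p ++ List.replicate p la).length = q + T := by
      simp [List.length_drop, hWlen]
      omega
    refine ⟨List.replicate r lc ++ (wordU u).take p,
      ((wordU u).drop p ++ List.replicate p la).take q,
      ((wordU u).drop p ++ List.replicate p la).drop q, ?_, ?_, ?_, ?_⟩
    · have hcount : (List.replicate r lc ++ (wordU u).take p).count lc = r := by
        rw [List.count_append, List.count_replicate]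
        simp
        exact List.count_eq_zero.mpr (fun h => lc_not_mem_wordU u (List.mem_of_mem_take h))
      rw [hcount]
      exact castne m (by omega) (by omega) (by omega)
    · -- eval of the attempt
      have hdp : (wordU u).drop p = lb :: (wordU u).drop (p + 1) := by
        rw [List.drop_eq_getElem_cons (by rw [hWlen]; exact hp)]
        congr 1
        rw [wordU_getElem u p hp, hup]
        rfl
      have htake : ((wordU u).drop p ++ List.replicate p la).take q
          = lb :: ((wordU u).drop (p + 1) ++ List.replicate p la).take (q - 1) := by
        rw [hdp]
        rw [show (lb :: (wordU u).drop (p + 1)) ++ List.replicate p la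
          = lb :: ((wordU u).drop (p + 1) ++ List.replicate p la) from rfl]
        exact take_cons_of_pos q (by omega) _ _
      rw [htake]
      apply D1_run_attempt hq
      · intro x hx
        intro hc
        subst hc
        have hx' := List.mem_of_mem_take hx
        rcases List.mem_append.mp hx' with h | h
        · exact lc_not_mem_wordU u (List.mem_of_mem_drop h)
        · exact absurd (List.eq_of_mem_replicate h) (by decide)
      · rw [List.length_take, List.length_append, List.length_drop, hWlen,
          List.length_replicate]
        omega
    · rw [List.length_drop, hYlen]
      omega
    · rw [List.take_append_drop q ((wordU u).drop p ++ List.replicate p la)]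
      simp only [← List.append_assoc]
      rw [List.append_assoc (List.replicate r lc) ((wordU u).take p) ((wordU u).drop p),
        List.take_append_drop]

/-- The counter test. -/
lemma test_G (hm : 3 ≤ m) (hq : 2 ≤ q) (r t : ℕ) (ht : 1 ≤ t)
    (u : Fin (q + T) → Fin 2) :
    ((List.replicate r lc ++ wordU u ++ List.replicate t lc ++ [lb]) ++
      ((lb :: List.replicate (q - 1) la) ++ List.replicate T la)) ∈
      (D0 m).accepts * ((D1 q).accepts * lenLang T) ↔
    ((r + t : ℕ) : ZMod m) ≠ ((m - 1 : ℕ) : ZMod m) := by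
  haveI : NeZero m := ⟨by omega⟩
  haveI : NeZero q := ⟨by omega⟩
  have hcountκ₁ : (List.replicate r lc ++ wordU u ++ List.replicate t lc ++ [lb]).count lc
      = r + t := by
    have h1 : List.count lc [lb] = 0 := by decide
    have h2 : List.count lc (List.replicate r lc) = r := by
      rw [List.count_replicate]; simp
    have h3 : List.count lc (List.replicate t lc) = t := by
      rw [List.count_replicate]; simp
    simp [List.count_append, h1, h2, h3, count_lc_wordU]
  constructor
  · -- forward
    intro hmem
    rw [memP_iff] at hmem
    obtain ⟨u₁, v, ω, hgate, heval, hωT, hdecomp⟩ := hmem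
    have hdecomp' : (u₁ ++ v) ++ ω =
        ((List.replicate r lc ++ wordU u ++ List.replicate t lc ++ [lb]) ++
          (lb :: List.replicate (q - 1) la)) ++ List.replicate T la := by
      simp only [List.append_assoc] at hdecomp ⊢
      exact hdecomp
    have hlen1 : (u₁ ++ v).length =
        ((List.replicate r lc ++ wordU u ++ List.replicate t lc ++ [lb]) ++
          (lb :: List.replicate (q - 1) la)).length := by
      have := congrArg List.length hdecomp'
      simp [List.length_append] at this ⊢
      omega
    obtain ⟨hκeq, hωeq⟩ := List.append_inj hdecomp' hlen1
    -- abbreviations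
    have hWlen : (wordU u).length = q + T := wordU_length u
    have hκlen : ((List.replicate r lc ++ wordU u ++ List.replicate t lc ++ [lb]) ++
        (lb :: List.replicate (q - 1) la)).length = r + (q + T) + t + 1 + q := by
      simp [List.length_append, hWlen]
      omega
    have hσ₀ : u₁.length ≤ r + (q + T) + t + 1 + q := by
      rw [← hκlen, ← hκeq]
      simp [List.length_append]
    have hv : v = ((List.replicate r lc ++ wordU u ++ List.replicate t lc ++ [lb]) ++
        (lb :: List.replicate (q - 1) la)).drop u₁.length := by
      rw [← hκeq, List.drop_left]
    have hu₁ : u₁ = ((List.replicate r lc ++ wordU u ++ List.replicate t lc ++ [lb]) ++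
        (lb :: List.replicate (q - 1) la)).take u₁.length := by
      rw [← hκeq, List.take_left]
    -- rewrite κ with the split-off last c
    have hreplt : List.replicate t lc = List.replicate (t - 1) lc ++ [lc] := by
      rw [← List.replicate_succ']
      congr 1
      omega
    have hκA : ((List.replicate r lc ++ wordU u ++ List.replicate t lc ++ [lb]) ++
        (lb :: List.replicate (q - 1) la)) =
        (List.replicate r lc ++ wordU u ++ List.replicate (t - 1) lc) ++
          (lc :: lb :: lb :: List.replicate (q - 1) la) := by
      rw [hreplt]
      simp [List.append_assoc]
    have hA'len : (List.replicate r lc ++ wordU u ++ List.replicate (t - 1) lc).length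
        = r + (q + T) + (t - 1) := by
      simp [List.length_append, hWlen]
      omega
    rcases Nat.lt_or_ge u₁.length (r + (q + T) + (t - 1) + 1) with hc1 | hc1
    · -- the suffix of v before the attempt still contains a `c`
      exfalso
      have hv2 : v = (List.replicate r lc ++ wordU u ++ List.replicate (t - 1) lc).drop u₁.length
          ++ (lc :: lb :: lb :: List.replicate (q - 1) la) := by
        rw [hv, hκA, List.drop_append_of_le_length (by omega)]
      rw [hv2, evalFrom_append] at heval
      have hres : (D1 q).evalFrom
          ((D1 q).evalFrom none ((List.replicate r lc ++ wordU u ++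
            List.replicate (t - 1) lc).drop u₁.length))
          (lc :: lb :: lb :: List.replicate (q - 1) la)
          = (D1 q).evalFrom none (lb :: lb :: List.replicate (q - 1) la) := by
        show (D1 q).evalFrom ((D1 q).step _ lc) _ = _
        rw [D1_step_c]
      rw [hres, D1_run_bba hq] at heval
      exact absurd heval (by simp)
    rcases Nat.eq_or_lt_of_le hc1 with hc2 | hc2
    · -- v = b b a^(q-1) : dies
      exfalso
      have hv2 : v = lb :: lb :: List.replicate (q - 1) la := by
        rw [hv, hκA]
        rw [show (List.replicate r lc ++ wordU u ++ List.replicate (t - 1) lc) ++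
          (lc :: lb :: lb :: List.replicate (q - 1) la) =
          ((List.replicate r lc ++ wordU u ++ List.replicate (t - 1) lc) ++ [lc]) ++
          (lb :: lb :: List.replicate (q - 1) la) from by simp [List.append_assoc]]
        rw [List.drop_left' (by simp [hA'len]; omega)]
      rw [hv2, D1_run_bba hq] at heval
      exact absurd heval (by simp)
    rcases Nat.eq_or_lt_of_le (show r + (q + T) + (t - 1) + 2 ≤ u₁.length by omega)
      with hc3 | hc3
    · -- the gate case : u₁ = κ₁ , count = r + t
      have hlen2 : u₁.length = r + (q + T) + t + 1 := by omega
      have hu₁2 : u₁ = List.replicate r lc ++ wordU u ++ List.replicate t lc ++ [lb] := by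
        rw [hu₁, hlen2]
        exact List.take_left' (by simp [List.length_append, hWlen]; omega)
      rw [hu₁2, hcountκ₁] at hgate
      exact hgate
    · -- v inside the trailing a-run : dies
      exfalso
      have hv2 : v = List.replicate ((q - 1) - (u₁.length - (r + (q + T) + (t - 1) + 3)))
          la := by
        rw [hv, hκA]
        rw [show (List.replicate r lc ++ wordU u ++ List.replicate (t - 1) lc) ++
          (lc :: lb :: lb :: List.replicate (q - 1) la) =
          ((List.replicate r lc ++ wordU u ++ List.replicate (t - 1) lc) ++ [lc, lb, lb]) ++
          List.replicate (q - 1) la from by simp [List.append_assoc]]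
        rw [List.drop_append]
        rw [List.drop_eq_nil_of_le (by simp [hA'len]; omega)]
        rw [List.drop_replicate]
        rw [List.nil_append]
        congr 1
        simp [hA'len]
        omega
      rw [hv2, D1_run_none _ (fun x hx => by
        rw [List.eq_of_mem_replicate hx]; decide)] at heval
      exact absurd heval (by simp)
  · -- backward
    intro hne
    rw [memP_iff]
    refine ⟨List.replicate r lc ++ wordU u ++ List.replicate t lc ++ [lb],
      lb :: List.replicate (q - 1) la, List.replicate T la, ?_, ?_, by simp, by
        simp [List.append_assoc]⟩
    · rw [hcountκ₁]
      exact hne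
    · exact D1_run_attempt hq _ (fun x hx => by
        rw [List.eq_of_mem_replicate hx]; decide) (by simp)

end Tests

lemma DW_accepts (p : ℕ) : (DW p).accepts = lenLang p := by
  ext w
  rw [DW_mem_accepts, mem_lenLang]

lemma sum_arith (k' : ℕ) (n : Fin (k' + 2) → ℕ)
    (h2 : 4 ≤ n ⟨1, by omega⟩)
    (h3 : ∀ i : Fin (k' + 2), 2 ≤ i.val → 3 ≤ n i) :
    (∑ i ∈ Finset.univ.erase (⟨0, by omega⟩ : Fin (k' + 2)), n i) - (2 * (k' + 2) - 2)
      = ((n ⟨1, by omega⟩ - 1) + ∑ i : Fin k', (n i.succ.succ - 2)) - 1 := by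
  have hsum1 : ∑ i : Fin (k' + 2), n i
      = n ⟨0, by omega⟩ + (n ⟨1, by omega⟩ + ∑ i : Fin k', n i.succ.succ) := by
    rw [Fin.sum_univ_succ, Fin.sum_univ_succ, Fin.succ_zero_eq_one]
    simp only [Fin.mk_zero, Fin.mk_one]
  have hsum2 : n ⟨0, by omega⟩ + ∑ i ∈ Finset.univ.erase (⟨0, by omega⟩ : Fin (k' + 2)), n i
      = ∑ i : Fin (k' + 2), n i := Finset.add_sum_erase _ n (Finset.mem_univ _)
  have hsum3 : ∑ i : Fin k', n i.succ.succ = (∑ i : Fin k', (n i.succ.succ - 2)) + 2 * k' := by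
    have hcongr : ∑ i : Fin k', n i.succ.succ
        = ∑ i : Fin k', ((n i.succ.succ - 2) + 2) := by
      apply Finset.sum_congr rfl
      intro i _
      have : 3 ≤ n i.succ.succ := h3 i.succ.succ (by simp [Fin.val_succ])
      omega
    rw [hcongr, Finset.sum_add_distrib]
    simp [Finset.sum_const, Finset.card_univ, mul_comm]
  omega

end Stmt15

open Stmt15 in
set_option maxHeartbeats 2000000 in
/-- For every `k ≥ 2`, `n₁ ≥ 3`, `n₂ ≥ 4` and `nᵢ ≥ 3` for `3 ≤ i ≤ k`,
there are languages over a three-letter alphabet, each accepted by a DFA with `nᵢ` states,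
whose concatenation needs at least `n₁ · 2^{(n₂+⋯+n_k)−(2k−2)}` states. -/
theorem stmt15 (k : ℕ) (hk : 2 ≤ k) (n : Fin k → ℕ)
    (h1 : 3 ≤ n ⟨0, Nat.lt_of_lt_of_le Nat.zero_lt_two hk⟩)
    (h2 : 4 ≤ n ⟨1, Nat.lt_of_lt_of_le Nat.one_lt_two hk⟩)
    (h3 : ∀ i : Fin k, 2 ≤ i.val → 3 ≤ n i) :
    ∃ L : Fin k → Language (Fin 3),
      (∀ i, ∃ (Q : Type) (_ : Fintype Q) (D : DFA (Fin 3) Q),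
        D.accepts = L i ∧ Fintype.card Q = n i) ∧
      (∀ (Q : Type) (inst : Fintype Q) (D : DFA (Fin 3) Q),
        D.accepts = (List.ofFn L).prod →
        n ⟨0, Nat.lt_of_lt_of_le Nat.zero_lt_two hk⟩ *
            2 ^ ((∑ i ∈ Finset.univ.erase
                (⟨0, Nat.lt_of_lt_of_le Nat.zero_lt_two hk⟩ : Fin k), n i) - (2 * k - 2))
          ≤ @Fintype.card Q inst) := by
  obtain ⟨k', rfl⟩ : ∃ k', k = k' + 2 := ⟨k - 2, by omega⟩
  have h1' : 3 ≤ n ⟨0, by omega⟩ := h1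
  have h2' : 4 ≤ n ⟨1, by omega⟩ := h2
  set m : ℕ := n ⟨0, by omega⟩ with hmdef
  set q : ℕ := n ⟨1, by omega⟩ - 1 with hqdef
  set T : ℕ := ∑ i : Fin k', (n i.succ.succ - 2) with hTdef
  have hm : 3 ≤ m := h1'
  have hq : 3 ≤ q := by omega
  haveI : NeZero m := ⟨by omega⟩
  haveI : NeZero q := ⟨by omega⟩
  refine ⟨fun i => if i.val = 0 then (D0 m).accepts else if i.val = 1 then (D1 q).accepts
    else lenLang (n i - 2), ?_, ?_⟩
  · -- part 1 : each language has a DFA of the right size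
    intro i
    by_cases hi0 : i.val = 0
    · have hieq : i = ⟨0, by omega⟩ := Fin.ext hi0
      refine ⟨ZMod m, inferInstance, D0 m, ?_, ?_⟩
      · simp [hi0]
      · rw [ZMod.card m, hieq]
    · by_cases hi1 : i.val = 1
      · have hieq : i = ⟨1, by omega⟩ := Fin.ext hi1
        refine ⟨Option (ZMod q), inferInstance, D1 q, ?_, ?_⟩
        · simp [hi0, hi1]
        · rw [Fintype.card_option, ZMod.card q, hieq]
          omega
      · have hi2 : 2 ≤ i.val := by omega
        have hni : 3 ≤ n i := h3 i hi2
        refine ⟨Fin ((n i - 2) + 2), inferInstance, DW (n i - 2), ?_, ?_⟩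
        · rw [DW_accepts]
          simp [hi0, hi1]
        · rw [Fintype.card_fin]
          omega
  · -- part 2 : the lower bound
    intro Q inst D hD
    -- the product language
    have hzero : ((0 : Fin (k' + 2)) : Fin (k' + 2)).val = 0 := by simp
    have hone : ((Fin.succ 0 : Fin (k' + 2))).val = 1 := by simp
    have hprod : (List.ofFn (fun i : Fin (k' + 2) =>
        if i.val = 0 then (D0 m).accepts else if i.val = 1 then (D1 q).accepts
          else lenLang (n i - 2))).prod
        = (D0 m).accepts * ((D1 q).accepts * lenLang T) := by
      rw [List.ofFn_succ, List.ofFn_succ, List.prod_cons, List.prod_cons]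
      have hf0 : (if ((0 : Fin (k' + 2))).val = 0 then (D0 m).accepts
          else if ((0 : Fin (k' + 2))).val = 1 then (D1 q).accepts
          else lenLang (n 0 - 2)) = (D0 m).accepts := by
        rw [if_pos hzero]
      have hrest : (List.ofFn (fun i : Fin k' =>
          if (i.succ.succ).val = 0 then (D0 m).accepts
          else if (i.succ.succ).val = 1 then (D1 q).accepts
          else lenLang (n i.succ.succ - 2))).prod = lenLang T := by
        have : (fun i : Fin k' =>
            if (i.succ.succ).val = 0 then (D0 m).accepts
            else if (i.succ.succ).val = 1 then (D1 q).accepts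
            else lenLang (n i.succ.succ - 2))
            = fun i : Fin k' => lenLang (n i.succ.succ - 2) := by
          funext i
          rw [if_neg (by simp [Fin.val_succ]), if_neg (by simp [Fin.val_succ])]
        rw [this, ofFn_lenLang_prod k' (fun i => n i.succ.succ - 2)]
      rw [hf0]
      congr 1
      rw [← hrest]
      try congr 1
      try simp [hone]
    have hP : D.accepts = (D0 m).accepts * ((D1 q).accepts * lenLang T) := by
      rw [hD, hprod]
    -- membership through the DFA
    have key : ∀ x z : List (Fin 3),
        ((x ++ z) ∈ (D0 m).accepts * ((D1 q).accepts * lenLang T)) ↔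
          D.evalFrom (D.eval x) z ∈ D.accept := by
      intro x z
      rw [← hP, DFA.mem_accepts]
      show D.evalFrom D.start (x ++ z) ∈ D.accept ↔ _
      rw [evalFrom_append]
      rfl
    -- the injective family
    set φ : (Fin (m - 1) × (Fin (q + T) → Fin 2)) → Q :=
      fun ru => D.eval (List.replicate ru.1.val lc ++ wordU ru.2) with hφ
    have hiff : ∀ (r r' : Fin (m - 1)) (u u' : Fin (q + T) → Fin 2),
        φ (r, u) = φ (r', u') → ∀ z,
        ((List.replicate r.val lc ++ wordU u) ++ z ∈
            (D0 m).accepts * ((D1 q).accepts * lenLang T)) ↔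
        ((List.replicate r'.val lc ++ wordU u') ++ z ∈
            (D0 m).accepts * ((D1 q).accepts * lenLang T)) := by
      intro r r' u u' heq z
      rw [key, key]
      simp only [hφ] at heq
      rw [heq]
    have hinj : Function.Injective φ := by
      rintro ⟨r, u⟩ ⟨r', u'⟩ heq
      have hrr : r = r' := by
        by_contra hne
        have hvalne : r.val ≠ r'.val := fun h => hne (Fin.ext h)
        have hrlt := r.isLt
        have hrlt' := r'.isLt
        set t : ℕ := m - 1 - r'.val with htdef
        have ht : 1 ≤ t := by omega
        have hiff2 := hiff r r' u u' heq
          (List.replicate t lc ++ ([lb] ++ ((lb :: List.replicate (q - 1) la) ++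
            List.replicate T la)))
        have hx : ((List.replicate r.val lc ++ wordU u) ++
            (List.replicate t lc ++ ([lb] ++ ((lb :: List.replicate (q - 1) la) ++
              List.replicate T la)))) ∈
            (D0 m).accepts * ((D1 q).accepts * lenLang T) ↔
            ((r.val + t : ℕ) : ZMod m) ≠ ((m - 1 : ℕ) : ZMod m) := by
          rw [show (List.replicate r.val lc ++ wordU u) ++
              (List.replicate t lc ++ ([lb] ++ ((lb :: List.replicate (q - 1) la) ++
                List.replicate T la)))
              = ((List.replicate r.val lc ++ wordU u ++ List.replicate t lc ++ [lb]) ++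
                ((lb :: List.replicate (q - 1) la) ++ List.replicate T la)) from by
            simp [List.append_assoc]]
          exact test_G hm (by omega) r.val t ht u
        have hy : ((List.replicate r'.val lc ++ wordU u') ++
            (List.replicate t lc ++ ([lb] ++ ((lb :: List.replicate (q - 1) la) ++
              List.replicate T la)))) ∈
            (D0 m).accepts * ((D1 q).accepts * lenLang T) ↔
            ((r'.val + t : ℕ) : ZMod m) ≠ ((m - 1 : ℕ) : ZMod m) := by
          rw [show (List.replicate r'.val lc ++ wordU u') ++
              (List.replicate t lc ++ ([lb] ++ ((lb :: List.replicate (q - 1) la) ++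
                List.replicate T la)))
              = ((List.replicate r'.val lc ++ wordU u' ++ List.replicate t lc ++ [lb]) ++
                ((lb :: List.replicate (q - 1) la) ++ List.replicate T la)) from by
            simp [List.append_assoc]]
          exact test_G hm (by omega) r'.val t ht u'
        have hyeq : r'.val + t = m - 1 := by omega
        have hymem : ¬ (((r'.val + t : ℕ) : ZMod m) ≠ ((m - 1 : ℕ) : ZMod m)) := by
          rw [hyeq]
          simp
        have hxmem : ((r.val + t : ℕ) : ZMod m) ≠ ((m - 1 : ℕ) : ZMod m) := by
          intro hcontra
          have hc2 : ((r'.val + t : ℕ) : ZMod m) = ((m - 1 : ℕ) : ZMod m) := by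
            rw [hyeq]
          have : ((r.val : ℕ) : ZMod m) = ((r'.val : ℕ) : ZMod m) := by
            have e1 : ((r.val : ℕ) : ZMod m) + ((t : ℕ) : ZMod m)
                = ((r'.val : ℕ) : ZMod m) + ((t : ℕ) : ZMod m) := by
              rw [← Nat.cast_add, ← Nat.cast_add, hcontra, hc2]
            exact add_right_cancel e1
          exact castne m (by omega) (by omega) hvalne this
        exact hymem (hy.mp (hiff2.mp (hx.mpr hxmem)))
      subst hrr
      have huu : u = u' := by
        funext p
        have hiff2 := hiff r r u u' heq (List.replicate p.val la)
        have hx : ((List.replicate r.val lc ++ wordU u) ++ List.replicate p.val la ∈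
            (D0 m).accepts * ((D1 q).accepts * lenLang T)) ↔ u p = 1 := by
          rw [List.append_assoc]
          have := test_F (T := T) hm (by omega) r.val r.isLt u p.val p.isLt
          exact this.trans (by rw [Fin.eta])
        have hy : ((List.replicate r.val lc ++ wordU u') ++ List.replicate p.val la ∈
            (D0 m).accepts * ((D1 q).accepts * lenLang T)) ↔ u' p = 1 := by
          rw [List.append_assoc]
          have := test_F (T := T) hm (by omega) r.val r.isLt u' p.val p.isLt
          exact this.trans (by rw [Fin.eta])
        have hfin : (u p = 1) ↔ (u' p = 1) := by
          rw [← hx, ← hy]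
          exact hiff2
        revert hfin
        have : ∀ a b : Fin 2, ((a = 1) ↔ (b = 1)) → a = b := by decide
        exact this (u p) (u' p)
      rw [huu]
    -- cardinality bookkeeping
    have hcard : (m - 1) * 2 ^ (q + T) ≤ @Fintype.card Q inst := by
      have := Fintype.card_le_of_injective φ hinj
      calc (m - 1) * 2 ^ (q + T)
          = Fintype.card (Fin (m - 1) × (Fin (q + T) → Fin 2)) := by
            rw [Fintype.card_prod, Fintype.card_fin, Fintype.card_fun,
              Fintype.card_fin, Fintype.card_fin]
        _ ≤ @Fintype.card Q inst := this
    -- arithmetic with the exponent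
    have harith := sum_arith k' n h2' h3
    rw [harith, ← hqdef, ← hTdef]
    have hfinal : m * 2 ^ ((q + T) - 1) ≤ (m - 1) * 2 ^ (q + T) := by
      have h2pow : 2 ^ (q + T) = 2 * 2 ^ ((q + T) - 1) := by
        rw [← pow_succ']
        congr 1
        omega
      rw [h2pow, ← mul_assoc]
      exact Nat.mul_le_mul_right _ (by omega)
    exact le_trans hfinal hcard
end

section
/- Let k ≥ 2, let n₁,…,n_k ≥ 1, and let L₁,…,L_k be unary languages such that each L_i is n_i-cyclic. Let d = gcd(n₁,…,n_k) and let F = d·f(n₁/d,…,n_k/d) − (k−1) (a natural number, since d·f(n₁/d,…,n_k/d) ≥ n₁+⋯+n_k − d ≥ k−1). Then: (a) for every natural number m ≥ F, a^m ∈ L₁L₂⋯L_k if and only if a^{m+d} ∈ L₁L₂⋯L_k; consequently L₁L₂⋯L_k is accepted by a DFA with F + d states. (b) This bound is tight: for the particular n_i-cyclic languages L_i = {a^m : n_i divides m+1}, every DFA accepting L₁L₂⋯L_k has at least F + d states. -/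
/-- The unary language `{a^m : d ∣ m+1} = a^{d−1}(a^d)*` over the one-letter alphabet `Unit`. -/
def divLang (d : ℕ) : Language Unit := {w | d ∣ w.length + 1}

section Stmt17Aux

lemma unary_eq (w : List Unit) : w = List.replicate w.length () :=
  List.eq_replicate_length.2 fun _ _ => rfl

lemma mem_prod_iff (M : List (Language Unit)) (m : ℕ) :
    List.replicate m () ∈ M.prod ↔
      ∃ ms : List ℕ, ms.sum = m ∧
        List.Forall₂ (fun mi Li => List.replicate mi () ∈ Li) ms M := by
  induction M generalizing m with
  | nil =>
    simp only [List.prod_nil, Language.mem_one, List.replicate_eq_nil_iff]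
    constructor
    · rintro rfl; exact ⟨[], rfl, List.Forall₂.nil⟩
    · rintro ⟨ms, hsum, hf⟩
      cases hf; simpa using hsum.symm
  | cons Lh Lt ih =>
    simp only [List.prod_cons, Language.mem_mul]
    constructor
    · rintro ⟨a, ha, b, hb, hab⟩
      have hal : a = List.replicate a.length () := unary_eq a
      have hbl : b = List.replicate b.length () := unary_eq b
      rw [hal] at ha; rw [hbl] at hb
      obtain ⟨ms, hsum, hf⟩ := (ih b.length).1 hb
      refine ⟨a.length :: ms, ?_, List.Forall₂.cons ha hf⟩
      have := congrArg List.length hab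
      simpa [hsum] using this
    · rintro ⟨ms, hsum, hf⟩
      cases hf with
      | @cons mh Lh' mrest Lrest hh ht =>
        refine ⟨List.replicate mh (), hh, List.replicate mrest.sum (),
          (ih mrest.sum).2 ⟨mrest, rfl, ht⟩, ?_⟩
        rw [← List.replicate_add]
        simpa using congrArg (fun x => List.replicate x ()) hsum

lemma mem_ofFn_prod_iff {k : ℕ} (L : Fin k → Language Unit) (m : ℕ) :
    List.replicate m () ∈ (List.ofFn L).prod ↔
      ∃ g : Fin k → ℕ, (∑ i, g i) = m ∧ ∀ i, List.replicate (g i) () ∈ L i := by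
  rw [mem_prod_iff]
  constructor
  · rintro ⟨ms, hsum, hf⟩
    rw [List.forall₂_iff_get] at hf
    obtain ⟨hlen, hget⟩ := hf
    rw [List.length_ofFn] at hlen
    refine ⟨fun i => ms.get (Fin.cast hlen.symm i), ?_, ?_⟩
    · rw [← hsum]
      rw [← List.sum_ofFn]
      congr 1
      apply List.ext_get (by simp [hlen])
      intro i h1 h2
      simp
    · intro i
      have := hget i (by omega) (by simp)
      simpa using this
  · rintro ⟨g, hsum, hg⟩
    refine ⟨List.ofFn g, by rw [List.sum_ofFn]; exact hsum, ?_⟩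
    rw [List.forall₂_iff_get]
    refine ⟨by simp, ?_⟩
    intro i h1 h2
    simp only [List.get_eq_getElem, List.getElem_ofFn]
    exact hg _
lemma cyc_add (L : Language Unit) (nn : ℕ)
    (h : ∀ m, List.replicate m () ∈ L ↔ List.replicate (m + nn) () ∈ L) (m c : ℕ) :
    List.replicate m () ∈ L ↔ List.replicate (m + c * nn) () ∈ L := by
  induction c with
  | zero => simp
  | succ c ih => rw [ih, h (m + c * nn)]; ring_nf

lemma cyc_mod (L : Language Unit) (nn : ℕ)
    (h : ∀ m, List.replicate m () ∈ L ↔ List.replicate (m + nn) () ∈ L) (m : ℕ) :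
    List.replicate m () ∈ L ↔ List.replicate (m % nn) () ∈ L := by
  conv_lhs => rw [← Nat.mod_add_div' m nn]
  exact (cyc_add L nn h (m % nn) (m / nn)).symm

/-- the "positive representability" predicate -/
def SRep {k : ℕ} (n : Fin k → ℕ) (d t : ℕ) : Prop :=
  ∃ c : Fin k → ℕ, (∀ i, 1 ≤ c i) ∧ ∑ i, c i * (n i / d) = t

lemma keyChar {k : ℕ} (n : Fin k → ℕ) (d f : ℕ) (hd : 0 < d)
    (hdn : ∀ i, d ∣ n i) (hn : ∀ i, 1 ≤ n i)
    (hS : ∀ t, f < t → SRep n d t)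
    (hsum : ∑ i, n i ≤ d * f + d)
    (L : Fin k → Language Unit)
    (hL : ∀ i m, List.replicate m () ∈ L i ↔ List.replicate (m + n i) () ∈ L i)
    (m : ℕ) (hm : d * f + 1 ≤ m + k) :
    List.replicate m () ∈ (List.ofFn L).prod ↔
      ∃ r : Fin k → ℕ, (∀ i, r i < n i) ∧ (∀ i, List.replicate (r i) () ∈ L i) ∧
        (∑ i, r i) % d = m % d := by
  rw [mem_ofFn_prod_iff]
  constructor
  · rintro ⟨g, hsumg, hg⟩
    refine ⟨fun i => g i % n i, fun i => Nat.mod_lt _ (hn i), fun i => ?_, ?_⟩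
    · exact (cyc_mod (L i) (n i) (hL i) (g i)).1 (hg i)
    · have h1 : ∀ i, g i % n i % d = g i % d := fun i =>
        Nat.mod_mod_of_dvd _ (hdn i)
      rw [Finset.sum_nat_mod, Finset.sum_congr rfl (fun i _ => h1 i), ← Finset.sum_nat_mod, hsumg]
  · rintro ⟨r, hrlt, hrmem, hrmod⟩
    -- sum of r ≤ sum n - k
    have hrsum : (∑ i, r i) + k ≤ ∑ i, n i := by
      have : ∀ i ∈ Finset.univ, r i + 1 ≤ n i := fun i _ => hrlt i
      calc (∑ i, r i) + k = ∑ i : Fin k, (r i + 1) := by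
            rw [Finset.sum_add_distrib]; simp
        _ ≤ ∑ i, n i := Finset.sum_le_sum this
    -- r-sum ≤ m
    have hdvd_sub : ∑ i, r i ≤ m := by
      by_contra hlt
      push_neg at hlt
      have h1 : (∑ i, r i) - m < d := by omega
      have h2 : 0 < (∑ i, r i) - m := by omega
      have h3 : d ∣ (∑ i, r i) - m :=
        (Nat.modEq_iff_dvd' (le_of_lt hlt)).mp hrmod.symm
      exact absurd (Nat.le_of_dvd h2 h3) (by omega)
    set t := m - ∑ i, r i with ht
    have hdt : d ∣ t := (Nat.modEq_iff_dvd' hdvd_sub).mp hrmod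
    have hdsumn : d ∣ ∑ i, n i := Finset.dvd_sum fun i _ => hdn i
    have hdtot : d ∣ t + ∑ i, n i := Nat.dvd_add hdt hdsumn
    set u := (t + ∑ i, n i) / d with hu
    have hdu : d * u = t + ∑ i, n i := Nat.mul_div_cancel' hdtot
    have hfu : f < u := by
      have h1 : d * f + 1 ≤ d * u := by omega
      by_contra hc
      push_neg at hc
      have := Nat.mul_le_mul_left d hc
      omega
    obtain ⟨c, hc1, hcsum⟩ := hS u hfu
    have hcn : ∀ i, c i * n i = d * (c i * (n i / d)) := by
      intro i
      conv_lhs => rw [← Nat.div_mul_cancel (hdn i)]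
      ring
    have hsumcn : ∑ i, c i * n i = d * u := by
      rw [Finset.sum_congr rfl (fun i _ => hcn i), ← Finset.mul_sum, hcsum]
    refine ⟨fun i => r i + (c i - 1) * n i, ?_, fun i => (cyc_add (L i) (n i) (hL i) (r i) (c i - 1)).1 (hrmem i)⟩
    have hterm : ∀ i, r i + (c i - 1) * n i + n i = r i + c i * n i := by
      intro i
      have h1 : c i - 1 + 1 = c i := Nat.succ_pred_eq_of_pos (hc1 i)
      calc r i + (c i - 1) * n i + n i = r i + ((c i - 1) + 1) * n i := by ring
        _ = r i + c i * n i := by rw [h1]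
    have : (∑ i, (r i + (c i - 1) * n i)) + ∑ i, n i = (∑ i, r i) + ∑ i, c i * n i := by
      rw [← Finset.sum_add_distrib, Finset.sum_congr rfl (fun i _ => hterm i),
        Finset.sum_add_distrib]
    have h9 : ∑ i, c i * n i = t + ∑ i, n i := hsumcn.trans hdu
    show (∑ i, (r i + (c i - 1) * n i)) = m
    omega
lemma dfa_exists (Lng : Language Unit) (F d : ℕ) (hd : 0 < d)
    (hp : ∀ m1 m2, F ≤ m1 → F ≤ m2 → m1 % d = m2 % d →
      (List.replicate m1 () ∈ Lng ↔ List.replicate m2 () ∈ Lng)) :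
    ∃ (Q : Type) (_ : Fintype Q) (D : DFA Unit Q),
      D.accepts = Lng ∧ Fintype.card Q = F + d := by
  set ρ : ℕ → ℕ := fun m => if m < F + d then m else F + (m - F) % d with hρ
  have hlt : ∀ m, ρ m < F + d := by
    intro m; simp only [hρ]; split
    · assumption
    · have := Nat.mod_lt (m - F) hd; omega
  have hFle : ∀ m, F ≤ m → F ≤ ρ m ∧ ρ m % d = m % d := by
    intro m hm; simp only [hρ]; split
    · exact ⟨hm, rfl⟩
    · refine ⟨by omega, ?_⟩
      rw [Nat.add_mod F ((m - F) % d) d, Nat.mod_mod_of_dvd _ dvd_rfl, ← Nat.add_mod,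
        show F + (m - F) = m from by omega]
  have hid : ∀ m, m < F + d → ρ m = m := by
    intro m hm; simp only [hρ, if_pos hm]
  have hstep : ∀ m, ρ (m + 1) = if ρ m + 1 < F + d then ρ m + 1 else F := by
    intro m
    rcases Nat.lt_trichotomy (m + 1) (F + d) with h1 | h1 | h1
    · rw [hid m (by omega), hid (m+1) h1, if_pos h1]
    · rw [hid m (by omega)]
      have : ¬ (m + 1 < F + d) := by omega
      rw [if_neg this]
      simp only [hρ, if_neg this, show m + 1 - F = d from by omega, Nat.mod_self, Nat.add_zero]
    · have hm : ¬ (m < F + d) := by omega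
      have hm1 : ¬ (m + 1 < F + d) := by omega
      have hr : (m - F) % d < d := Nat.mod_lt _ hd
      simp only [hρ, if_neg hm, if_neg hm1]
      have key : (m + 1 - F) % d = ((m - F) % d + 1) % d := by
        rw [show m + 1 - F = (m - F) + 1 from by omega, Nat.add_mod (m - F) 1 d,
          Nat.add_mod ((m - F) % d) 1 d, Nat.mod_mod_of_dvd _ dvd_rfl]
      rcases Nat.lt_or_ge ((m - F) % d + 1) d with h2 | h2
      · rw [if_pos (by omega), key, Nat.mod_eq_of_lt h2]; omega
      · have h3 : (m - F) % d + 1 = d := by omega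
        rw [if_neg (by omega), key, h3, Nat.mod_self, Nat.add_zero]
  refine ⟨Fin (F + d), inferInstance,
    { step := fun s _ => ⟨if (s : ℕ) + 1 < F + d then (s : ℕ) + 1 else F, by split <;> omega⟩,
      start := ⟨0, by omega⟩,
      accept := {s | List.replicate (s : ℕ) () ∈ Lng} }, ?_, by simp⟩
  set D : DFA Unit (Fin (F + d)) :=
    { step := fun s _ => ⟨if (s : ℕ) + 1 < F + d then (s : ℕ) + 1 else F, by split <;> omega⟩,
      start := ⟨0, by omega⟩,
      accept := {s | List.replicate (s : ℕ) () ∈ Lng} } with hD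
  have heval : ∀ m, D.eval (List.replicate m ()) = ⟨ρ m, hlt m⟩ := by
    intro m
    induction m with
    | zero =>
      apply Fin.ext
      simp [DFA.eval, hD, hid 0 (by omega)]
    | succ m ih =>
      rw [List.replicate_succ', DFA.eval_append_singleton, ih]
      apply Fin.ext
      simp only [hD, hstep m]
  ext w
  have hw : w = List.replicate w.length () := unary_eq w
  rw [hw]
  set m := w.length
  rw [DFA.mem_accepts, heval m]
  show List.replicate (ρ m) () ∈ Lng ↔ _
  rcases Nat.lt_or_ge m (F + d) with h | h
  · rw [hid m h]
  · exact hp (ρ m) m (hFle m (by omega)).1 (by omega) (hFle m (by omega)).2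
lemma P0_iff {k : ℕ} (n : Fin k → ℕ) (d : ℕ) (hd : 0 < d)
    (hdn : ∀ i, d ∣ n i) (hn : ∀ i, 1 ≤ n i) (m : ℕ) :
    List.replicate m () ∈ (List.ofFn fun i => divLang (n i)).prod ↔
      d ∣ (m + k) ∧ SRep n d ((m + k) / d) := by
  rw [mem_ofFn_prod_iff]
  have hmem : ∀ (j : ℕ) (i : Fin k),
      (List.replicate j () ∈ divLang (n i)) ↔ n i ∣ j + 1 := by
    intro j i
    show n i ∣ (List.replicate j ()).length + 1 ↔ _
    simp
  constructor
  · rintro ⟨g, hsumg, hg⟩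
    set a : Fin k → ℕ := fun i => (g i + 1) / n i with ha
    have han : ∀ i, a i * n i = g i + 1 := fun i =>
      Nat.div_mul_cancel ((hmem _ i).1 (hg i))
    have ha1 : ∀ i, 1 ≤ a i := by
      intro i
      have := han i
      by_contra hc
      push_neg at hc
      interval_cases h : a i <;> omega
    have hsum2 : ∑ i, a i * n i = m + k := by
      rw [Finset.sum_congr rfl (fun i _ => han i), Finset.sum_add_distrib]
      simp [hsumg]
    have hdvd : d ∣ m + k := by
      rw [← hsum2]
      exact Finset.dvd_sum fun i _ => Dvd.dvd.mul_left (hdn i) _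
    refine ⟨hdvd, a, ha1, ?_⟩
    have hcn : ∀ i, a i * n i = d * (a i * (n i / d)) := by
      intro i
      conv_lhs => rw [← Nat.div_mul_cancel (hdn i)]
      ring
    have : d * ∑ i, a i * (n i / d) = m + k := by
      rw [Finset.mul_sum, ← Finset.sum_congr rfl (fun i _ => hcn i), hsum2]
    exact (Nat.div_eq_of_eq_mul_left hd (by rw [← this, mul_comm])).symm
  · rintro ⟨hdvd, c, hc1, hcsum⟩
    have hcn1 : ∀ i, 1 ≤ c i * n i := fun i => Nat.one_le_iff_ne_zero.2 (by
      have := hc1 i; have := hn i; positivity)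
    refine ⟨fun i => c i * n i - 1, ?_, fun i => (hmem _ i).2 ?_⟩
    · have hcn : ∀ i, c i * n i = d * (c i * (n i / d)) := by
        intro i
        conv_lhs => rw [← Nat.div_mul_cancel (hdn i)]
        ring
      have hs : ∑ i, c i * n i = m + k := by
        rw [Finset.sum_congr rfl (fun i _ => hcn i), ← Finset.mul_sum, hcsum,
          Nat.mul_div_cancel' hdvd]
      have hterm : ∀ i, (c i * n i - 1) + 1 = c i * n i := fun i => by
        have := hcn1 i; omega
      have : (∑ i, (c i * n i - 1)) + k = ∑ i, c i * n i := by
        calc (∑ i, (c i * n i - 1)) + k = ∑ i, ((c i * n i - 1) + 1) := by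
              rw [Finset.sum_add_distrib]; simp
          _ = _ := Finset.sum_congr rfl (fun i _ => hterm i)
      show (∑ i, (c i * n i - 1)) = m
      omega
    · rw [show c i * n i - 1 + 1 = c i * n i from by have := hcn1 i; omega]
      exact dvd_mul_left (n i) (c i)

end Stmt17Aux

/-- Concatenation of `k ≥ 2` cyclic unary languages.  Here `d = gcd(n₁,…,n_k)`,
and `f` is the modified Frobenius number of `(n₁/d,…,n_k/d)`, i.e. the greatest natural number
not expressible as a *positive* integer combination of the `nᵢ/d`; `F = d·f − (k−1)`.
(a) For any `nᵢ`-cyclic languages `Lᵢ`, membership of `a^m` in `L₁⋯L_k` is `d`-periodic from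
`F` on, so `L₁⋯L_k` is accepted by a DFA with `F + d` states.
(b) For the particular `nᵢ`-cyclic languages `Lᵢ = {a^m : nᵢ ∣ m+1}`, every DFA accepting
`L₁⋯L_k` has at least `F + d` states. -/
theorem stmt17 (k : ℕ) (hk : 2 ≤ k) (n : Fin k → ℕ) (hn : ∀ i, 1 ≤ n i)
    (f : ℕ)
    (hf : IsGreatest
      {t : ℕ | ¬ ∃ c : Fin k → ℕ, (∀ i, 1 ≤ c i) ∧
        ∑ i, c i * (n i / Finset.univ.gcd n) = t} f) :
    (∀ L : Fin k → Language Unit,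
      (∀ i, ∀ m : ℕ, List.replicate m () ∈ L i ↔ List.replicate (m + n i) () ∈ L i) →
      (∀ m : ℕ, Finset.univ.gcd n * f - (k - 1) ≤ m →
        (List.replicate m () ∈ (List.ofFn L).prod ↔
          List.replicate (m + Finset.univ.gcd n) () ∈ (List.ofFn L).prod)) ∧
      ∃ (Q : Type) (_ : Fintype Q) (D : DFA Unit Q),
        D.accepts = (List.ofFn L).prod ∧
        Fintype.card Q = (Finset.univ.gcd n * f - (k - 1)) + Finset.univ.gcd n) ∧
    (∀ (Q : Type) (inst : Fintype Q) (D : DFA Unit Q),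
      D.accepts = (List.ofFn fun i => divLang (n i)).prod →
      (Finset.univ.gcd n * f - (k - 1)) + Finset.univ.gcd n ≤ @Fintype.card Q inst) := by
  set d := Finset.univ.gcd n with hdd
  -- basic facts
  have hd : 0 < d := by
    by_contra h
    push_neg at h
    have h0 : d = 0 := by omega
    have h1 := (Finset.gcd_eq_zero_iff.1 (hdd ▸ h0 : Finset.univ.gcd n = 0))
      ⟨0, by omega⟩ (Finset.mem_univ _)
    have := hn ⟨0, by omega⟩
    omega
  have hdn : ∀ i, d ∣ n i := fun i => Finset.gcd_dvd (Finset.mem_univ i)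
  have hf1 : ¬ SRep n d f := hf.1
  have hS : ∀ t, f < t → SRep n d t := by
    intro t ht
    by_contra hc
    have : t ≤ f := hf.2 hc
    omega
  have hnd1 : ∀ i, 1 ≤ n i / d := fun i =>
    (Nat.one_le_div_iff hd).2 (Nat.le_of_dvd (hn i) (hdn i))
  have hsumdiv : ∑ i, n i / d ≤ f + 1 := by
    by_contra hc
    push_neg at hc
    obtain ⟨c, hc1, hcs⟩ := hS ((∑ i, n i / d) - 1) (by omega)
    have hle : ∑ i, n i / d ≤ ∑ i, c i * (n i / d) :=
      Finset.sum_le_sum fun i _ => Nat.le_mul_of_pos_left _ (hc1 i)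
    omega
  have hsumn : d * ∑ i, (n i / d) = ∑ i, n i := by
    rw [Finset.mul_sum]
    exact Finset.sum_congr rfl fun i _ => Nat.mul_div_cancel' (hdn i)
  have hsum : ∑ i, n i ≤ d * f + d := by
    have h1 := Nat.mul_le_mul_left d hsumdiv
    have h2 : d * (f + 1) = d * f + d := by ring
    omega
  have hk1 : k ≤ f + 1 := by
    have h1 : (k : ℕ) = ∑ _i : Fin k, 1 := by simp
    have h2 : ∑ _i : Fin k, (1 : ℕ) ≤ ∑ i, n i / d := Finset.sum_le_sum fun i _ => hnd1 i
    omega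
  have hdfk : k - 1 ≤ d * f := by
    have h1 : f ≤ d * f := Nat.le_mul_of_pos_left f hd
    omega
  refine ⟨fun L hL => ⟨?_, ?_⟩, ?_⟩
  · -- part (a) periodicity
    intro m hm
    rw [keyChar n d f hd hdn hn hS hsum L hL m (by omega),
      keyChar n d f hd hdn hn hS hsum L hL (m + d) (by omega)]
    constructor
    · rintro ⟨r, h1, h2, h3⟩
      exact ⟨r, h1, h2, by rw [Nat.add_mod_right]; exact h3⟩
    · rintro ⟨r, h1, h2, h3⟩
      rw [Nat.add_mod_right] at h3
      exact ⟨r, h1, h2, h3⟩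
  · -- part (a) DFA existence
    apply dfa_exists _ (d * f - (k - 1)) d hd
    intro m1 m2 h1 h2 h3
    rw [keyChar n d f hd hdn hn hS hsum L hL m1 (by omega),
      keyChar n d f hd hdn hn hS hsum L hL m2 (by omega), h3]
  · -- part (b) lower bound
    intro Q inst D hacc
    set F := d * f - (k - 1) with hF
    have P0c : ∀ m, (List.replicate m () ∈ (List.ofFn fun i => divLang (n i)).prod) ↔
        d ∣ (m + k) ∧ SRep n d ((m + k) / d) := P0_iff n d hd hdn hn
    have dist : ∀ i j : ℕ, i < j → j < F + d → ∃ z : ℕ,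
        ¬ ((List.replicate (i + z) () ∈ D.accepts) ↔
           (List.replicate (j + z) () ∈ D.accepts)) := by
      intro i j hij hjlt
      rw [hacc]
      by_cases hdvd : d ∣ (j - i)
      · obtain ⟨e, he⟩ := hdvd
        have he1 : 1 ≤ e := by
          by_contra h0
          push_neg at h0
          have he0 : e = 0 := by omega
          rw [he0, Nat.mul_zero] at he
          omega
        have hde : d ≤ d * e := Nat.le_mul_of_pos_right d he1
        have hik : i + k ≤ d * f := by omega
        refine ⟨d * f - (k + i), ?_⟩
        have hz1 : i + (d * f - (k + i)) + k = d * f := by omega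
        have hz2 : j + (d * f - (k + i)) + k = d * f + d * e := by omega
        rw [P0c, P0c, hz1, hz2]
        have hq1 : d * f / d = f := Nat.mul_div_cancel_left f hd
        have hmul2 : d * f + d * e = d * (f + e) := by ring
        have hq2 : (d * f + d * e) / d = f + e := by
          rw [hmul2, Nat.mul_div_cancel_left _ hd]
        have hR : d ∣ (d * f + d * e) ∧ SRep n d ((d * f + d * e) / d) :=
          ⟨⟨f + e, by ring⟩, by rw [hq2]; exact hS (f + e) (by omega)⟩
        have hL' : ¬ (d ∣ d * f ∧ SRep n d (d * f / d)) := by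
          rintro ⟨-, hs⟩
          rw [hq1] at hs
          exact hf1 hs
        tauto
      · have hik : i + k ≤ d * f + d := by omega
        refine ⟨d * f + d - (k + i), ?_⟩
        have hz1 : i + (d * f + d - (k + i)) + k = d * f + d := by omega
        have hz2 : j + (d * f + d - (k + i)) + k = (d * f + d) + (j - i) := by omega
        rw [P0c, P0c, hz1, hz2]
        have hdvd1 : d ∣ d * f + d := ⟨f + 1, by ring⟩
        have hq1 : (d * f + d) / d = f + 1 := by
          rw [show d * f + d = d * (f + 1) from by ring, Nat.mul_div_cancel_left _ hd]
        have hL' : d ∣ (d * f + d) ∧ SRep n d ((d * f + d) / d) :=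
          ⟨hdvd1, by rw [hq1]; exact hS (f + 1) (by omega)⟩
        have hR : ¬ d ∣ ((d * f + d) + (j - i)) := by
          intro hc
          exact hdvd ((Nat.dvd_add_right hdvd1).1 hc)
        tauto
    have key : ∀ (i j : ℕ), i < j → j < F + d →
        D.eval (List.replicate i ()) = D.eval (List.replicate j ()) → False := by
      intro i j hij hjlt hev
      obtain ⟨z, hz⟩ := dist i j hij hjlt
      apply hz
      rw [DFA.mem_accepts, DFA.mem_accepts]
      have h1 : ∀ a : ℕ, D.eval (List.replicate (a + z) ()) =
          D.evalFrom (D.eval (List.replicate a ())) (List.replicate z ()) := by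
        intro a
        conv_lhs => rw [List.replicate_add]
        exact D.evalFrom_of_append D.start _ _
      rw [h1 i, h1 j, hev]
    have hinj : Function.Injective
        (fun s : Fin (F + d) => D.eval (List.replicate (s : ℕ) ())) := by
      intro s1 s2 hs
      simp only at hs
      rcases Nat.lt_trichotomy (s1 : ℕ) (s2 : ℕ) with h | h | h
      · exact absurd hs (fun hc => key s1 s2 h s2.isLt hc)
      · exact Fin.ext h
      · exact absurd hs.symm (fun hc => key s2 s1 h s1.isLt hc)
    have hcard := Fintype.card_le_of_injective _ hinj
    simpa using hcard
end

section
/- Let k ≥ 2, let λ₁,…,λ_k ≥ 1 and μ₁,…,μ_k ≥ 0, and let L₁,…,L_k be unary languages such that for each i and every m ≥ μ_i, a^m ∈ L_i ⟺ a^{m+λ_i} ∈ L_i. For each nonempty subset I ⊆ {1,…,k} let d_I = gcd{λ_i : i ∈ I} and let f(I) be the modified Frobenius number of the family (λ_i/d_I)_{i ∈ I}; set d_∅ = 1 and f(∅) = 0. Let λ = lcm(λ₁,…,λ_k). Then for every natural number m such that m + k ≥ μ₁+μ₂+⋯+μ_k + 1 + d_I·f(I) holds for every subset I ⊆ {1,…,k},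 one has a^m ∈ L₁L₂⋯L_k if and only if a^{m+λ} ∈ L₁L₂⋯L_k. -/
private lemma unit_eq_replicate (x : List Unit) : x = List.replicate x.length () :=
  List.eq_replicate_length.mpr fun _ _ => rfl

private lemma mem_listProd_iff : ∀ {k : ℕ} (L : Fin k → Language Unit) (n : ℕ),
    List.replicate n () ∈ (List.ofFn L).prod ↔
      ∃ c : Fin k → ℕ, (∀ i, List.replicate (c i) () ∈ L i) ∧ ∑ i, c i = n := by
  intro k
  induction k with
  | zero =>
      intro L n
      simp only [List.ofFn_zero, List.prod_nil, Language.mem_one]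
      constructor
      · intro h
        have : n = 0 := by simpa using congrArg List.length h
        exact ⟨fun _ => 0, fun i => i.elim0, by simp [this]⟩
      · rintro ⟨c, -, hsum⟩
        have : n = 0 := by simpa using hsum.symm
        simp [this]
  | succ k ih =>
      intro L n
      rw [List.ofFn_succ, List.prod_cons]
      constructor
      · intro hx
        obtain ⟨a, ha, b, hb, hab⟩ := Language.mem_mul.mp hx
        have hb' : List.replicate b.length () ∈ (List.ofFn fun i => L i.succ).prod := by
          rw [← unit_eq_replicate b]; exact hb
        obtain ⟨c, hc, hsum⟩ := (ih _ _).mp hb'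
        refine ⟨Fin.cases a.length c, ?_, ?_⟩
        · intro i
          refine Fin.cases ?_ ?_ i
          · simpa [← unit_eq_replicate a] using ha
          · intro j; simpa using hc j
        · have hlen : a.length + b.length = n := by
            have := congrArg List.length hab; simpa using this
          rw [Fin.sum_univ_succ]
          simpa [hsum] using hlen
      · rintro ⟨c, hc, hsum⟩
        rw [Language.mem_mul]
        refine ⟨List.replicate (c 0) (), hc 0,
          List.replicate (∑ i : Fin k, c i.succ) (), ?_, ?_⟩
        · exact (ih _ _).mpr ⟨fun i => c i.succ, fun i => hc i.succ, rfl⟩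
        · rw [← List.replicate_add]
          congr 1
          rw [← hsum, Fin.sum_univ_succ]

private lemma transfer {L : Language Unit} {lam μ : ℕ}
    (h : ∀ m, μ ≤ m → (List.replicate m () ∈ L ↔ List.replicate (m + lam) () ∈ L))
    {ρ : ℕ} (hρ : μ ≤ ρ) (t : ℕ) :
    List.replicate ρ () ∈ L ↔ List.replicate (ρ + t * lam) () ∈ L := by
  induction t with
  | zero => simp
  | succ t ih =>
      rw [ih]
      have he : ρ + (t + 1) * lam = (ρ + t * lam) + lam := by ring
      rw [he]
      exact h _ (le_trans hρ (Nat.le_add_right _ _))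


/-- Concatenation of `k ≥ 2` unary languages that are eventually
`λᵢ`-periodic from `μᵢ` on.  For each nonempty `I ⊆ Fin k`, `I.gcd lam` is `d_I` and `F I` is
the modified Frobenius number `f(I)` of the family `(λᵢ/d_I)_{i∈I}` (the greatest natural
number not expressible as a positive integer combination); for `I = ∅` the term
`d_I·f(I)` vanishes (`d_∅·f(∅) = 0`, matching `d_∅ = 1`, `f(∅) = 0`).  If
`μ₁+⋯+μ_k + 1 + d_I·f(I) ≤ m + k` for every `I`, then `a^m ∈ L₁⋯L_k` iff
`a^{m+λ} ∈ L₁⋯L_k`, where `λ = lcm(λ₁,…,λ_k)`. -/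
theorem stmt19 (k : ℕ) (hk : 2 ≤ k) (lam μ : Fin k → ℕ) (hlam : ∀ i, 1 ≤ lam i)
    (L : Fin k → Language Unit)
    (hL : ∀ i, ∀ m : ℕ, μ i ≤ m →
      (List.replicate m () ∈ L i ↔ List.replicate (m + lam i) () ∈ L i))
    (F : Finset (Fin k) → ℕ)
    (hF : ∀ I : Finset (Fin k), I.Nonempty →
      IsGreatest
        {t : ℕ | ¬ ∃ c : Fin k → ℕ, (∀ i ∈ I, 1 ≤ c i) ∧
          ∑ i ∈ I, c i * (lam i / I.gcd lam) = t} (F I))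
    (hF0 : F ∅ = 0)
    (m : ℕ)
    (hm : ∀ I : Finset (Fin k), (∑ i, μ i) + 1 + I.gcd lam * F I ≤ m + k) :
    List.replicate m () ∈ (List.ofFn L).prod ↔
      List.replicate (m + Finset.univ.lcm lam) () ∈ (List.ofFn L).prod := by
  classical
  set lamTot := Finset.univ.lcm lam with hlamTot
  have hm0 : (∑ i, μ i) + 1 ≤ m + k := by
    have := hm ∅
    simpa [Finset.gcd_empty] using this
  have hcard : (Finset.univ : Finset (Fin k)).card = k := by simp
  rw [mem_listProd_iff, mem_listProd_iff]
  constructor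
  · -- easy direction: push up
    rintro ⟨c, hc, hsum⟩
    have hne : ∃ i, μ i ≤ c i := by
      by_contra h
      push_neg at h
      have h2 : (∑ i, c i) + k ≤ ∑ i, μ i := by
        calc (∑ i, c i) + k = ∑ i : Fin k, (c i + 1) := by
              rw [Finset.sum_add_distrib]; simp
          _ ≤ ∑ i, μ i := Finset.sum_le_sum fun i _ => h i
      omega
    obtain ⟨i0, hi0⟩ := hne
    have hdvd : lam i0 ∣ lamTot := Finset.dvd_lcm (Finset.mem_univ _)
    refine ⟨fun i => c i + if i = i0 then lamTot else 0, ?_, ?_⟩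
    · intro i
      by_cases h : i = i0
      · subst h
        simp only [if_pos rfl]
        have := (transfer (hL i) hi0 (lamTot / lam i)).mp (hc i)
        rwa [Nat.div_mul_cancel hdvd] at this
      · simpa [h] using hc i
    · rw [Finset.sum_add_distrib, hsum]
      simp
  · -- hard direction: come back down via Frobenius
    rintro ⟨c, hc, hsum⟩
    set I : Finset (Fin k) := Finset.univ.filter (fun i => μ i ≤ c i) with hIdef
    set d := I.gcd lam with hd
    have hImem : ∀ i, i ∈ I ↔ μ i ≤ c i := by
      intro i; simp [hIdef]
    -- the small part
    set J : Finset (Fin k) := Finset.univ.filter (fun i => ¬ μ i ≤ c i) with hJdef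
    have hsplit : ∑ i ∈ I, c i + ∑ i ∈ J, c i = m + lamTot := by
      rw [← hsum]
      exact Finset.sum_filter_add_sum_filter_not _ _ _
    set ρ : Fin k → ℕ := fun i => μ i + (c i - μ i) % lam i with hρdef
    set q : Fin k → ℕ := fun i => (c i - μ i) / lam i with hqdef
    have hdecomp : ∀ i ∈ I, c i = ρ i + q i * lam i := by
      intro i hi
      have hμ : μ i ≤ c i := (hImem i).mp hi
      have h1 : (c i - μ i) % lam i + (c i - μ i) / lam i * lam i = c i - μ i := by
        rw [Nat.mul_comm]; exact Nat.mod_add_div _ _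
      simp only [hρdef, hqdef]
      omega
    have hρ_ge : ∀ i, μ i ≤ ρ i := fun i => Nat.le_add_right _ _
    have hρ_mem : ∀ i ∈ I, List.replicate (ρ i) () ∈ L i := by
      intro i hi
      have hmem := hc i
      rw [hdecomp i hi] at hmem
      exact (transfer (hL i) (hρ_ge i) (q i)).mpr hmem
    -- nonemptiness of I
    have hIne : I.Nonempty := by
      rw [Finset.filter_nonempty_iff]
      by_contra h
      push_neg at h
      have h2 : (∑ i, c i) + k ≤ ∑ i, μ i := by
        calc (∑ i, c i) + k = ∑ i : Fin k, (c i + 1) := by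
              rw [Finset.sum_add_distrib]; simp
          _ ≤ ∑ i, μ i := Finset.sum_le_sum fun i _ => h i (Finset.mem_univ i)
      omega
    have hd_dvd : ∀ i ∈ I, d ∣ lam i := fun i hi => Finset.gcd_dvd hi
    obtain ⟨j0, hj0⟩ := hIne
    have hd_lam : d ∣ lamTot :=
      (hd_dvd j0 hj0).trans (Finset.dvd_lcm (Finset.mem_univ _))
    have hd_pos : 0 < d := by
      rcases Nat.eq_zero_or_pos d with h0 | h0
      · exfalso
        have := hd_dvd j0 hj0
        rw [h0] at this
        have := Nat.eq_zero_of_zero_dvd this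
        have := hlam j0
        omega
      · exact h0
    -- abbreviations for the sums
    set B := ∑ i ∈ J, c i with hB
    set R := ∑ i ∈ I, ρ i with hR
    set M := ∑ i ∈ I, q i * lam i with hM
    set SL := ∑ i ∈ I, lam i with hSL
    have hIc : ∑ i ∈ I, c i = R + M := by
      rw [hR, hM, ← Finset.sum_add_distrib]
      exact Finset.sum_congr rfl hdecomp
    have hBbound : B + J.card ≤ ∑ i ∈ J, μ i := by
      have : ∀ i ∈ J, c i + 1 ≤ μ i := by
        intro i hi
        have : ¬ μ i ≤ c i := by
          have := Finset.mem_filter.mp hi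
          exact this.2
        omega
      calc B + J.card = ∑ i ∈ J, (c i + 1) := by
            rw [Finset.sum_add_distrib]; simp [hB]
        _ ≤ ∑ i ∈ J, μ i := Finset.sum_le_sum this
    have hRbound : R + I.card ≤ ∑ i ∈ I, μ i + SL := by
      have : ∀ i ∈ I, ρ i + 1 ≤ μ i + lam i := by
        intro i _
        have hmod : (c i - μ i) % lam i < lam i := Nat.mod_lt _ (hlam i)
        simp only [hρdef]
        omega
      calc R + I.card = ∑ i ∈ I, (ρ i + 1) := by
            rw [Finset.sum_add_distrib]; simp [hR]
        _ ≤ ∑ i ∈ I, (μ i + lam i) := Finset.sum_le_sum this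
        _ = ∑ i ∈ I, μ i + SL := Finset.sum_add_distrib
    have hcards : I.card + J.card = k := by
      rw [hIdef, hJdef]
      rw [Finset.card_filter_add_card_filter_not]
      exact hcard
    have hμsplit : ∑ i ∈ I, μ i + ∑ i ∈ J, μ i = ∑ i, μ i :=
      Finset.sum_filter_add_sum_filter_not _ _ _
    have hmI := hm I
    rw [← hd] at hmI
    -- key inequality
    have hkey : lamTot + d * F I + 1 ≤ SL + M := by omega
    obtain ⟨N, hN⟩ : ∃ N, SL + M = N + lamTot := ⟨SL + M - lamTot, by omega⟩
    have hd_N : d ∣ N := by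
      have h1 : d ∣ SL + M := by
        refine dvd_add (Finset.dvd_sum hd_dvd) (Finset.dvd_sum ?_)
        intro i hi
        exact Dvd.dvd.mul_left (hd_dvd i hi) (q i)
      have h2 : d ∣ (SL + M) - lamTot := Nat.dvd_sub h1 hd_lam
      have h3 : (SL + M) - lamTot = N := by omega
      rwa [h3] at h2
    obtain ⟨t, ht⟩ := hd_N
    have hFt : F I < t := by
      have : d * F I < d * t := by omega
      exact Nat.lt_of_mul_lt_mul_left this
    have hex : ∃ w : Fin k → ℕ, (∀ i ∈ I, 1 ≤ w i) ∧
        ∑ i ∈ I, w i * (lam i / d) = t := by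
      by_contra hcon
      have : t ∈ {t : ℕ | ¬ ∃ c : Fin k → ℕ, (∀ i ∈ I, 1 ≤ c i) ∧
          ∑ i ∈ I, c i * (lam i / I.gcd lam) = t} := by
        simp only [Set.mem_setOf_eq, ← hd]
        exact hcon
      exact absurd ((hF I ⟨j0, hj0⟩).2 this) (not_le.mpr hFt)
    obtain ⟨w, hw1, hw2⟩ := hex
    have hwN : ∑ i ∈ I, w i * lam i = N := by
      calc ∑ i ∈ I, w i * lam i = ∑ i ∈ I, (w i * (lam i / d)) * d := by
            refine Finset.sum_congr rfl fun i hi => ?_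
            rw [mul_assoc, Nat.div_mul_cancel (hd_dvd i hi)]
        _ = (∑ i ∈ I, w i * (lam i / d)) * d := (Finset.sum_mul _ _ _).symm
        _ = t * d := by rw [hw2]
        _ = N := by rw [ht, mul_comm]
    set Me := ∑ i ∈ I, (w i - 1) * lam i with hMe
    have hMeN : Me + SL = N := by
      rw [hMe, hSL, ← Finset.sum_add_distrib, ← hwN]
      refine Finset.sum_congr rfl fun i hi => ?_
      have h1 := hw1 i hi
      have h2 : (w i - 1) * lam i + lam i = (w i - 1 + 1) * lam i := by ring
      rw [h2, Nat.sub_add_cancel h1]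
    have hMeM : Me + lamTot = M := by omega
    -- final decomposition
    refine ⟨fun i => if μ i ≤ c i then ρ i + (w i - 1) * lam i else c i, ?_, ?_⟩
    · intro i
      by_cases h : μ i ≤ c i
      · simp only [if_pos h]
        have hi : i ∈ I := (hImem i).mpr h
        exact (transfer (hL i) (hρ_ge i) (w i - 1)).mp (hρ_mem i hi)
      · simp only [if_neg h]
        exact hc i
    · have hs : ∑ i : Fin k, (if μ i ≤ c i then ρ i + (w i - 1) * lam i else c i)
          = ∑ i ∈ I, (ρ i + (w i - 1) * lam i) + ∑ i ∈ J, c i := by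
        rw [hIdef, hJdef, ← Finset.sum_filter_add_sum_filter_not
          (Finset.univ : Finset (Fin k)) (fun i => μ i ≤ c i)]
        congr 1
        · exact Finset.sum_congr rfl fun i hi => by
            rw [if_pos ((Finset.mem_filter.mp hi).2)]
        · exact Finset.sum_congr rfl fun i hi => by
            rw [if_neg ((Finset.mem_filter.mp hi).2)]
      rw [hs, Finset.sum_add_distrib]
      omega
end
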